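/- arXiv:1906.09937 — 6 statements merged into one kernel-verified Lean document; each statement's English description precedes it below -/
import Mathlib

section
/- For positive integers 1 ≤ k ≤ n, let h_{k|n}(p) = Σ_{i=k}^{n} C(n,i) p^i (1−p)^{n−i} and R_{k|n}(p) = (1−p)·h_{k|n}'(p)/(1−h_{k|n}(p)) for p∈(0,1). Then the function p ↦ p·R_{k|n}'(p)/R_{k|n}(p) is positive (≥ 0) and decreasing on (0,1). -/
open Set

/-- Reliability (dual distortion) function of a `k`-out-of-`n` system with
i.i.d. components: `h_{k|n}(p) = Σ_{i=k}^{n} C(n,i) pⁱ (1-p)^{n-i}`. -/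
noncomputable def hkn (k n : ℕ) (p : ℝ) : ℝ :=
  ∑ i ∈ Finset.Icc k n, (n.choose i : ℝ) * p ^ i * (1 - p) ^ (n - i)

/-- `R_{k|n}(p) = (1-p) h_{k|n}'(p) / (1 - h_{k|n}(p))`. -/
noncomputable def Rkn (k n : ℕ) (p : ℝ) : ℝ :=
  (1 - p) * deriv (hkn k n) p / (1 - hkn k n p)

noncomputable def den (k n : ℕ) (p : ℝ) : ℝ :=
  ∑ i ∈ Finset.range k, (n.choose i : ℝ) * p ^ i * (1 - p) ^ (n - i)

noncomputable def denD (k n : ℕ) (p : ℝ) : ℝ :=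
  ∑ i ∈ Finset.range k, (n.choose i : ℝ) *
    ((i : ℝ) * p ^ (i-1) * (1 - p) ^ (n - i) - ((n-i : ℕ) : ℝ) * p ^ i * (1 - p) ^ (n - i - 1))

noncomputable def num (k n : ℕ) (p : ℝ) : ℝ :=
  ∑ i ∈ Finset.range k, ((k : ℝ) - 1 - i) * (n.choose i : ℝ) * p ^ i * (1 - p) ^ (n - 1 - i)

noncomputable def Ank (k n : ℕ) (p : ℝ) : ℝ :=
  ((k:ℝ) * n.choose k) * p ^ (k-1) * (1-p) ^ (n-k+1)

noncomputable def bb (k n i : ℕ) : ℝ := ((k : ℝ) - 1 - i) * (n.choose i : ℝ)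
noncomputable def aa (k n i : ℕ) : ℝ := if i < k then (n.choose i : ℝ) else 0
noncomputable def nnc (k n i : ℕ) : ℝ :=
  (if i < k then bb k n i else 0) + (if i = 0 then 0 else bb k n (i-1))

noncomputable def BB (k n : ℕ) (x : ℝ) : ℝ := ∑ i ∈ Finset.range k, bb k n i * x^i
noncomputable def DD (k n : ℕ) (x : ℝ) : ℝ := ∑ i ∈ Finset.range k, (n.choose i : ℝ) * x^i
noncomputable def NN (k n : ℕ) (x : ℝ) : ℝ := ∑ i ∈ Finset.range (k+1), nnc k n i * x^i

lemma choose_id1 {n i : ℕ} (hn : 1 ≤ n) (hi : 1 ≤ i) :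
    n * (n-1).choose (i-1) = n.choose i * i := by
  have h := Nat.add_one_mul_choose_eq (n-1) (i-1)
  rwa [Nat.sub_add_cancel hn, Nat.sub_add_cancel hi] at h

lemma choose_id2 (n i : ℕ) (hn : 1 ≤ n) :
    (n - i) * n.choose i = n * (n-1).choose i := by
  have h1 := Nat.choose_succ_right_eq n i
  have h2 := Nat.add_one_mul_choose_eq (n-1) i
  rw [Nat.sub_add_cancel hn] at h2
  calc (n - i) * n.choose i = n.choose i * (n-i) := by ring
    _ = n.choose (i+1) * (i+1) := h1.symm
    _ = n * (n-1).choose i := h2.symm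

lemma hkn_hasDerivAt (k n : ℕ) (hk1 : 1 ≤ k) (hkn' : k ≤ n) (p : ℝ) :
    HasDerivAt (hkn k n)
      ((k : ℝ) * n.choose k * p ^ (k-1) * (1-p) ^ (n-k)) p := by
  have hn1 : 1 ≤ n := hk1.trans hkn'
  set u : ℕ → ℝ := fun i => (n : ℝ) * ((n-1).choose (i-1) : ℝ) * p ^ (i-1) * (1-p) ^ (n-i) with hu
  have key : HasDerivAt (hkn k n) (∑ i ∈ Finset.Icc k n, (u i - u (i+1))) p := by
    apply HasDerivAt.fun_sum
    intro i hi
    simp only [Finset.mem_Icc] at hi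
    obtain ⟨hik, hin⟩ := hi
    have hi1 : 1 ≤ i := hk1.trans hik
    have hq : HasDerivAt (fun p : ℝ => (1 - p) ^ (n - i))
        (((n-i : ℕ) : ℝ) * (1-p) ^ (n-i-1) * (-1)) p :=
      HasDerivAt.fun_pow ((hasDerivAt_id p).const_sub 1) _
    have hp : HasDerivAt (fun p : ℝ => (n.choose i : ℝ) * p ^ i)
        ((n.choose i : ℝ) * ((i : ℝ) * p ^ (i-1))) p :=
      (hasDerivAt_pow i p).const_mul _
    have hd := hp.fun_mul hq
    refine hd.congr_deriv ?_
    have c1 : ((n.choose i : ℕ) : ℝ) * (i : ℝ) = (n : ℝ) * ((n-1).choose (i-1) : ℝ) := by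
      exact_mod_cast (choose_id1 hn1 hi1).symm
    have c2 : (((n - i : ℕ)) : ℝ) * (n.choose i : ℝ) = (n : ℝ) * ((n-1).choose i : ℝ) := by
      exact_mod_cast choose_id2 n i hn1
    have e3 : p ^ i = p ^ (i-1) * p := by
      conv_lhs => rw [← Nat.sub_add_cancel hi1]
      rw [pow_succ]
    rw [hu]
    simp only [Nat.add_sub_cancel]
    rw [show n - (i+1) = n - i - 1 from by omega]
    rw [← c1, ← c2]
    ring
  convert key using 1
  have e : k + (n-k+1) = n+1 := by omega
  have trf : ∑ i ∈ Finset.Icc k n, (u i - u (i+1)) = u k - u (n+1) := by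
    rw [← Finset.Ico_add_one_right_eq_Icc, Finset.sum_Ico_eq_sum_range,
      show n+1-k = n-k+1 from by omega]
    have h := Finset.sum_range_sub' (fun m => u (k+m)) (n-k+1)
    rw [e] at h
    simpa [add_assoc] using h
  have hun : u (n+1) = 0 := by
    have hz : (n-1).choose n = 0 := Nat.choose_eq_zero_of_lt (by omega)
    simp [hu, hz]
  have huk : u k = (n : ℝ) * ((n-1).choose (k-1) : ℝ) * p ^ (k-1) * (1-p) ^ (n-k) := rfl
  rw [trf, hun, sub_zero, huk]
  have c1 : ((n.choose k : ℕ) : ℝ) * (k : ℝ) = (n : ℝ) * ((n-1).choose (k-1) : ℝ) := by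
    exact_mod_cast (choose_id1 hn1 hk1).symm
  rw [← c1]
  ring

lemma one_sub_hkn (k n : ℕ) (hkn' : k ≤ n) (p : ℝ) :
    1 - hkn k n p = den k n p := by
  have hb : (1 : ℝ) = ∑ i ∈ Finset.range (n+1), (n.choose i : ℝ) * p ^ i * (1 - p) ^ (n - i) := by
    calc (1:ℝ) = (p + (1-p))^n := by norm_num
      _ = ∑ m ∈ Finset.range (n+1), p ^ m * (1-p) ^ (n-m) * (n.choose m : ℝ) := add_pow p (1-p) n
      _ = ∑ i ∈ Finset.range (n+1), (n.choose i : ℝ) * p ^ i * (1 - p) ^ (n - i) :=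
          Finset.sum_congr rfl (fun i _ => by ring)
  have hsplit : ∑ i ∈ Finset.range (n+1), (n.choose i : ℝ) * p ^ i * (1 - p) ^ (n - i)
      = den k n p + hkn k n p := by
    rw [den, hkn, ← Finset.Ico_add_one_right_eq_Icc, Finset.range_eq_Ico, Finset.range_eq_Ico]
    exact (Finset.sum_Ico_consecutive (M := ℝ) _ (Nat.zero_le k) (by omega)).symm
  rw [hb, hsplit]; ring

lemma den_hasDerivAt (k n : ℕ) (p : ℝ) : HasDerivAt (den k n) (denD k n p) p := by
  unfold den denD
  apply HasDerivAt.fun_sum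
  intro i _
  have hq : HasDerivAt (fun p : ℝ => (1 - p) ^ (n - i))
      (((n-i : ℕ) : ℝ) * (1-p) ^ (n-i-1) * (-1)) p :=
    HasDerivAt.fun_pow ((hasDerivAt_id p).const_sub 1) _
  have hp : HasDerivAt (fun p : ℝ => (n.choose i : ℝ) * p ^ i)
      ((n.choose i : ℝ) * ((i : ℝ) * p ^ (i-1))) p :=
    (hasDerivAt_pow i p).const_mul _
  have hd := hp.fun_mul hq
  refine hd.congr_deriv ?_
  ring

lemma den_pos (k n : ℕ) (hk1 : 1 ≤ k) {p : ℝ} (hp : p ∈ Set.Ioo (0:ℝ) 1) :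
    0 < den k n p := by
  obtain ⟨hp0, hp1⟩ := hp
  have hq : 0 < 1 - p := by linarith
  apply Finset.sum_pos'
  · intro i _
    positivity
  · refine ⟨0, Finset.mem_range.2 hk1, ?_⟩
    norm_num
    positivity

lemma num_nonneg (k n : ℕ) {p : ℝ} (hp : p ∈ Set.Ioo (0:ℝ) 1) :
    0 ≤ num k n p := by
  obtain ⟨hp0, hp1⟩ := hp
  have hq : 0 < 1 - p := by linarith
  apply Finset.sum_nonneg
  intro i hi
  simp only [Finset.mem_range] at hi
  have : (i : ℝ) ≤ (k : ℝ) - 1 := by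
    have : (i : ℝ) + 1 ≤ k := by exact_mod_cast hi
    linarith
  have h1 : 0 ≤ (k : ℝ) - 1 - i := by linarith
  positivity

lemma key_identity (k n : ℕ) (hk1 : 1 ≤ k) (hkn' : k ≤ n) (p : ℝ) :
    (((k:ℝ)-1)*(1-p) - ((n:ℝ)-(k:ℝ)+1)*p) * den k n p - p*(1-p) * denD k n p
      = (1-p) * num k n p := by
  unfold den denD num
  rw [Finset.mul_sum, Finset.mul_sum, Finset.mul_sum, ← Finset.sum_sub_distrib]
  apply Finset.sum_congr rfl
  intro i hi
  simp only [Finset.mem_range] at hi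
  have hin : i ≤ n - 1 := by omega
  have e1 : n - i = (n - 1 - i) + 1 := by omega
  have e2 : n - i - 1 = n - 1 - i := by omega
  have c1 : ((n - i : ℕ) : ℝ) = (n : ℝ) - i := by
    have : i ≤ n := by omega
    exact Nat.cast_sub this
  rw [c1, e2, e1, pow_succ]
  rcases Nat.eq_zero_or_pos i with rfl | hi1
  · push_cast
    ring
  · have e3 : i = (i - 1) + 1 := by omega
    rw [show p ^ i = p ^ (i-1) * p from by rw [e3, pow_succ]; congr 1 <;> omega]
    ring

lemma Rkn_eq (k n : ℕ) (hk1 : 1 ≤ k) (hkn' : k ≤ n) :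
    Rkn k n = fun p => Ank k n p / den k n p := by
  funext p
  rw [Rkn, (hkn_hasDerivAt k n hk1 hkn' p).deriv, one_sub_hkn k n hkn', Ank]
  rw [pow_succ]
  ring_nf

lemma f_eq_num_div_den (k n : ℕ) (hk1 : 1 ≤ k) (hkn' : k ≤ n)
    {p : ℝ} (hp : p ∈ Set.Ioo (0:ℝ) 1) :
    p * deriv (Rkn k n) p / Rkn k n p = num k n p / den k n p := by
  obtain ⟨hp0, hp1⟩ := hp
  have hq0 : (0:ℝ) < 1 - p := by linarith
  have hD := den_pos k n hk1 ⟨hp0, hp1⟩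
  -- derivative of Ank
  have hA : HasDerivAt (Ank k n)
      (((k:ℝ) * n.choose k) * ((((k-1 : ℕ)):ℝ) * p ^ (k-1-1) * (1-p) ^ (n-k+1))
        + ((k:ℝ) * n.choose k) * p^(k-1) * ((((n-k+1 : ℕ)):ℝ) * (1-p) ^ (n-k+1-1) * (-1))) p := by
    have hq : HasDerivAt (fun p : ℝ => (1 - p) ^ (n-k+1))
        ((((n-k+1 : ℕ)):ℝ) * (1-p) ^ (n-k+1-1) * (-1)) p :=
      HasDerivAt.fun_pow ((hasDerivAt_id p).const_sub 1) _
    have hpw : HasDerivAt (fun p : ℝ => ((k:ℝ) * n.choose k) * p ^ (k-1))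
        (((k:ℝ) * n.choose k) * (((k-1 : ℕ):ℝ) * p ^ (k-1-1))) p :=
      (hasDerivAt_pow (k-1) p).const_mul _
    have := hpw.fun_mul hq
    refine this.congr_deriv ?_
    ring
  obtain ⟨A', hA'⟩ : ∃ x : ℝ, x = ((k:ℝ) * n.choose k) * ((((k-1 : ℕ)):ℝ) * p ^ (k-1-1) * (1-p) ^ (n-k+1))
        + ((k:ℝ) * n.choose k) * p^(k-1) * ((((n-k+1 : ℕ)):ℝ) * (1-p) ^ (n-k+1-1) * (-1)) := ⟨_, rfl⟩
  rw [← hA'] at hA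
  -- derivative of Rkn
  have hR : HasDerivAt (Rkn k n)
      ((A' * den k n p - Ank k n p * denD k n p) / (den k n p)^2) p := by
    rw [Rkn_eq k n hk1 hkn']
    exact hA.div (den_hasDerivAt k n p) hD.ne'
  -- the pq * A' identity
  have hA'id : p * (1-p) * A' = (((k:ℝ)-1)*(1-p) - ((n:ℝ)-(k:ℝ)+1)*p) * Ank k n p := by
    rw [hA', Ank]
    have ck : (((k-1:ℕ)):ℝ) = (k:ℝ) - 1 := by
      have := Nat.cast_sub (R := ℝ) hk1
      simpa using this
    have cn : (((n-k+1:ℕ)):ℝ) = (n:ℝ) - k + 1 := by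
      push_cast [Nat.cast_sub hkn']
      ring
    have e1 : n-k+1-1 = n-k := by omega
    have e2 : p * (((k-1:ℕ)):ℝ) * p^(k-1-1) = ((k:ℝ)-1) * p^(k-1) := by
      rcases Nat.lt_or_ge k 2 with h | h
      · have hk : k = 1 := by omega
        subst hk
        norm_num
      · have : k - 1 = (k-2)+1 := by omega
        rw [ck, this, pow_succ, show k-2+1-1 = k-2 from by omega]
        ring
    have e3 : (1-p) * (1-p)^(n-k) = (1-p)^(n-k+1) := by
      rw [pow_succ]; ring
    rw [e1, cn]
    calc p * (1-p) * (((k:ℝ) * n.choose k) * ((((k-1 : ℕ)):ℝ) * p ^ (k-1-1) * (1-p) ^ (n-k+1))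
        + ((k:ℝ) * n.choose k) * p^(k-1) * (((n:ℝ)-k+1) * (1-p) ^ (n-k) * (-1)))
        = ((k:ℝ) * n.choose k) * (p * (((k-1:ℕ)):ℝ) * p^(k-1-1)) * (1-p) * (1-p)^(n-k+1)
          - ((k:ℝ) * n.choose k) * p^(k-1) * p * ((n:ℝ)-k+1) * ((1-p) * (1-p)^(n-k)) := by ring
      _ = _ := by rw [e2, e3]; ring
  -- main computation
  rw [hR.deriv, Rkn_eq k n hk1 hkn']
  simp only
  have hApos : 0 < Ank k n p := by
    rw [Ank]
    have : 0 < (k:ℝ) * n.choose k := by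
      have := Nat.choose_pos hkn'
      positivity
    positivity
  have key : p * (A' * den k n p - Ank k n p * denD k n p) = num k n p * Ank k n p := by
    apply mul_left_cancel₀ hq0.ne'
    have I := key_identity k n hk1 hkn' p
    linear_combination den k n p * hA'id + Ank k n p * I
  have h2 : p * ((A' * den k n p - Ank k n p * denD k n p)/(den k n p)^2) / (Ank k n p / den k n p)
      = p * (A' * den k n p - Ank k n p * denD k n p) / (den k n p * Ank k n p) := by
    field_simp
  rw [h2, key]
  rw [mul_comm (den k n p) (Ank k n p), mul_comm (num k n p) (Ank k n p)]
  exact mul_div_mul_left _ _ hApos.ne'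

lemma adjacent (k n : ℕ) (hkn' : k ≤ n) (m : ℕ) (hm : m + 2 ≤ k) :
    nnc k n (m+1) * (n.choose m : ℝ) ≤ nnc k n m * (n.choose (m+1) : ℝ) := by
  have hmn : m + 1 ≤ n := by omega
  have hCm : (0:ℝ) < (n.choose m : ℝ) := by exact_mod_cast Nat.choose_pos (by omega)
  have hCm1 : (0:ℝ) < (n.choose (m+1) : ℝ) := by exact_mod_cast Nat.choose_pos hmn
  have h1 : (n.choose (m+1) : ℝ) * ((m:ℝ)+1) = (n.choose m : ℝ) * ((n:ℝ) - m) := by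
    have := Nat.choose_succ_right_eq n m
    have hc : ((n.choose (m+1) * (m+1) : ℕ) : ℝ) = ((n.choose m * (n - m) : ℕ) : ℝ) := by
      exact_mod_cast congrArg (Nat.cast (R := ℝ)) this
    push_cast [Nat.cast_sub (show m ≤ n by omega)] at hc
    linarith
  rcases Nat.eq_zero_or_pos m with rfl | hm1
  · -- m = 0 case
    have hn0 : nnc k n 0 = (k:ℝ) - 1 := by
      simp [nnc, bb, show 0 < k by omega]
    have hn1 : nnc k n 1 = bb k n 1 + bb k n 0 := by
      simp [nnc, show 1 < k by omega]
    rw [hn0, hn1]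
    simp only [bb, Nat.choose_one_right, Nat.choose_zero_right, Nat.cast_one,
      Nat.cast_zero, Nat.cast_ofNat]
    norm_num
    have hkn2 : (k:ℝ) ≤ n := by exact_mod_cast hkn'
    nlinarith
  · -- m ≥ 1
    have h2 : (n.choose m : ℝ) * (m:ℝ) = (n.choose (m-1) : ℝ) * ((n:ℝ) - m + 1) := by
      have := Nat.choose_succ_right_eq n (m-1)
      rw [show m - 1 + 1 = m from by omega] at this
      have hc : ((n.choose m * m : ℕ) : ℝ) = ((n.choose (m-1) * (n - (m-1)) : ℕ) : ℝ) := by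
        exact_mod_cast congrArg (Nat.cast (R := ℝ)) this
      push_cast [Nat.cast_sub (show m - 1 ≤ n by omega)] at hc
      rw [Nat.cast_sub (show 1 ≤ m from hm1)] at hc
      push_cast at hc
      linarith
    have hnm : nnc k n m = bb k n m + bb k n (m-1) := by
      simp [nnc, show m < k by omega, show m ≠ 0 by omega]
    have hnm1 : nnc k n (m+1) = bb k n (m+1) + bb k n m := by
      simp [nnc, show m + 1 < k by omega]
    rw [hnm, hnm1]
    simp only [bb]
    have hc1 : ((m-1 : ℕ) : ℝ) = (m:ℝ) - 1 := by
      push_cast [Nat.cast_sub hm1]; ring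
    rw [hc1]
    set C := (n.choose m : ℝ)
    set u := (n.choose (m+1) : ℝ)
    set v := (n.choose (m-1) : ℝ)
    have hE : ((((k:ℝ)-1-m)*C + ((k:ℝ)-m)*v) * u - ((((k:ℝ)-1-(m+1))*u + ((k:ℝ)-1-m)*C)) * C)
        * (((m:ℝ)+1) * ((n:ℝ)+1-m)) = C^2 * ((n:ℝ)+1) * ((n:ℝ)-k+1) := by
      have hk2 : ((k:ℝ)-(m+1)) = (k:ℝ)-1-m := by ring
      linear_combination (((n:ℝ)+1-m) * (C + ((k:ℝ)-m)*v)) * h1 + (-(((k:ℝ)-m)*C*((n:ℝ)-m))) * h2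
    have hP : (0:ℝ) < ((m:ℝ)+1) * ((n:ℝ)+1-m) := by
      have hmn' : (m:ℝ) ≤ n := by exact_mod_cast (by omega : m ≤ n)
      have h01 : (0:ℝ) < (m:ℝ)+1 := by positivity
      have h02 : (0:ℝ) < (n:ℝ)+1-m := by linarith
      exact mul_pos h01 h02
    have hQ : (0:ℝ) ≤ C^2 * ((n:ℝ)+1) * ((n:ℝ)-k+1) := by
      have hkn2 : (k:ℝ) ≤ n := by exact_mod_cast hkn'
      have hn0' : (0:ℝ) ≤ ((n:ℝ)+1) := by positivity
      have hn1' : (0:ℝ) ≤ (n:ℝ)-k+1 := by linarith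
      exact mul_nonneg (mul_nonneg (sq_nonneg C) hn0') hn1'
    have hdiff : (0:ℝ) ≤ ((((k:ℝ)-1-m)*C + ((k:ℝ)-m)*v) * u
        - ((((k:ℝ)-1-(m+1))*u + ((k:ℝ)-1-m)*C)) * C) := by
      have h0 : (0:ℝ) * (((m:ℝ)+1) * ((n:ℝ)+1-m))
          ≤ ((((k:ℝ)-1-m)*C + ((k:ℝ)-m)*v) * u
            - ((((k:ℝ)-1-(m+1))*u + ((k:ℝ)-1-m)*C)) * C) * (((m:ℝ)+1) * ((n:ℝ)+1-m)) := by
        rw [zero_mul, hE]; exact hQ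
      exact le_of_mul_le_mul_right h0 hP
    push_cast
    nlinarith [hdiff]

lemma chain_ineq {a u : ℕ → ℝ} {K : ℕ} (ha : ∀ m, m < K → 0 < a m)
    (hadj : ∀ m, m + 1 < K → u (m+1) * a m ≤ u m * a (m+1)) :
    ∀ i j, i ≤ j → j < K → u j * a i ≤ u i * a j := by
  intro i j hij hj
  induction j with
  | zero =>
    have : i = 0 := by omega
    subst this; rfl
  | succ j ih =>
    rcases Nat.lt_or_ge i (j+1) with h | h
    · have hij' : i ≤ j := by omega
      have h1 := ih hij' (by omega)
      have h2 := hadj j (by omega)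
      have hai : 0 < a i := ha i (by omega)
      have haj : 0 < a j := ha j (by omega)
      have haj1 : 0 < a (j+1) := ha (j+1) hj
      have big : u (j+1) * a i * a j ≤ u i * a (j+1) * a j := by
        have b1 : u (j+1) * a j * a i ≤ u j * a (j+1) * a i :=
          mul_le_mul_of_nonneg_right h2 hai.le
        have b2 : u j * a i * a (j+1) ≤ u i * a j * a (j+1) :=
          mul_le_mul_of_nonneg_right h1 haj1.le
        nlinarith [b1, b2]
      exact le_of_mul_le_mul_right big haj
    · have : i = j + 1 := by omega
      subst this; rfl

lemma pair_ineq (k n : ℕ) (hk1 : 1 ≤ k) (hkn' : k ≤ n) (i j : ℕ) (hij : i < j) (hj : j ≤ k) :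
    nnc k n j * aa k n i ≤ nnc k n i * aa k n j := by
  rcases Nat.lt_or_ge j k with hjk | hjk
  · -- j < k : both aa's are the binomials
    have hpos : ∀ m, m < k → (0:ℝ) < (fun i => (n.choose i : ℝ)) m := by
      intro m hm
      show (0:ℝ) < (n.choose m : ℝ)
      exact_mod_cast Nat.choose_pos (le_trans (le_of_lt hm) hkn')
    have hadj : ∀ m, m + 1 < k →
        nnc k n (m+1) * (fun i => (n.choose i : ℝ)) m ≤ nnc k n m * (fun i => (n.choose i : ℝ)) (m+1) := by
      intro m hm
      exact adjacent k n hkn' m (by omega)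
    have := chain_ineq hpos hadj i j (le_of_lt hij) hjk
    simpa [aa, show i < k by omega, hjk] using this
  · -- j = k
    have hj' : j = k := by omega
    rw [hj']
    have h1 : aa k n k = 0 := by simp [aa]
    have h2 : nnc k n k = 0 := by
      have hz : ((k:ℝ) - 1 - ((k-1 : ℕ) : ℝ)) = 0 := by
        rw [Nat.cast_sub hk1]; push_cast; ring
      simp [nnc, bb, show ¬ (k < k) by omega, show k ≠ 0 by omega, hz]
    rw [h1, h2]
    simp

lemma pair_sum {K : ℕ} (u a : ℕ → ℝ)
    (hpair : ∀ i j, i < j → j < K → u j * a i ≤ u i * a j)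
    {x y : ℝ} (hx : 0 < x) (hxy : x ≤ y) :
    ∑ i ∈ Finset.range K, ∑ j ∈ Finset.range K,
      u i * a j * (y^i * x^j - x^i * y^j) ≤ 0 := by
  have hsymm : ∀ i j, i ∈ Finset.range K → j ∈ Finset.range K →
      u i * a j * (y^i * x^j - x^i * y^j) + u j * a i * (y^j * x^i - x^j * y^i) ≤ 0 := by
    have main : ∀ i j, i ≤ j → j < K →
        u i * a j * (y^i * x^j - x^i * y^j) + u j * a i * (y^j * x^i - x^j * y^i) ≤ 0 := by
      intro i j hij hj
      rcases Nat.eq_or_lt_of_le hij with rfl | hlt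
      · simp [mul_comm]
      · have hd : y^i * x^j - x^i * y^j ≤ 0 := by
          have e1 : x^j = x^i * x^(j-i) := by rw [← pow_add]; congr 1; omega
          have e2 : y^j = y^i * y^(j-i) := by rw [← pow_add]; congr 1; omega
          have hple : x^(j-i) ≤ y^(j-i) := pow_le_pow_left₀ hx.le hxy _
          have hxi : 0 < x^i := pow_pos hx i
          have hyi : (0:ℝ) < y^i := pow_pos (lt_of_lt_of_le hx hxy) i
          rw [e1, e2]
          nlinarith [mul_le_mul_of_nonneg_left hple (mul_pos hxi hyi).le]
        have hcoef := hpair i j hlt hj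
        have comb : u i * a j * (y^i * x^j - x^i * y^j) + u j * a i * (y^j * x^i - x^j * y^i)
            = (u i * a j - u j * a i) * (y^i * x^j - x^i * y^j) := by ring
        rw [comb]
        exact mul_nonpos_of_nonneg_of_nonpos (by linarith) hd
    intro i j hi hj
    simp only [Finset.mem_range] at hi hj
    rcases le_or_gt i j with h | h
    · exact main i j h hj
    · have := main j i (le_of_lt h) hi
      linarith
  have hS' : ∑ i ∈ Finset.range K, ∑ j ∈ Finset.range K, u j * a i * (y^j * x^i - x^j * y^i)
      = ∑ i ∈ Finset.range K, ∑ j ∈ Finset.range K, u i * a j * (y^i * x^j - x^i * y^j) :=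
    Finset.sum_comm
  have h2 : ∑ i ∈ Finset.range K, ∑ j ∈ Finset.range K,
      (u i * a j * (y^i * x^j - x^i * y^j) + u j * a i * (y^j * x^i - x^j * y^i)) ≤ 0 := by
    apply Finset.sum_nonpos; intro i hi
    apply Finset.sum_nonpos; intro j hj
    exact hsymm i j hi hj
  have h3 : ∑ i ∈ Finset.range K, ∑ j ∈ Finset.range K,
      (u i * a j * (y^i * x^j - x^i * y^j) + u j * a i * (y^j * x^i - x^j * y^i))
      = (∑ i ∈ Finset.range K, ∑ j ∈ Finset.range K, u i * a j * (y^i * x^j - x^i * y^j))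
        + ∑ i ∈ Finset.range K, ∑ j ∈ Finset.range K, u j * a i * (y^j * x^i - x^j * y^i) := by
    rw [← Finset.sum_add_distrib]
    apply Finset.sum_congr rfl
    intro i _
    rw [← Finset.sum_add_distrib]
  rw [h3, hS'] at h2
  linarith

lemma num_rep (k n : ℕ) (hk1 : 1 ≤ k) (hkn' : k ≤ n) {p : ℝ} (hp : p ∈ Set.Ioo (0:ℝ) 1) :
    num k n p = (1-p)^(n-1) * BB k n (p/(1-p)) := by
  obtain ⟨hp0, hp1⟩ := hp
  have hq : (1-p) ≠ 0 := by intro h; linarith [h]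
  unfold num BB bb
  rw [Finset.mul_sum]
  apply Finset.sum_congr rfl
  intro i hi
  simp only [Finset.mem_range] at hi
  rw [div_pow, show (1-p)^(n-1) = (1-p)^(n-1-i)*(1-p)^i from by
    rw [← pow_add]; congr 1; omega]
  field_simp

lemma den_rep (k n : ℕ) (hk1 : 1 ≤ k) (hkn' : k ≤ n) {p : ℝ} (hp : p ∈ Set.Ioo (0:ℝ) 1) :
    den k n p = (1-p)^n * DD k n (p/(1-p)) := by
  obtain ⟨hp0, hp1⟩ := hp
  have hq : (1-p) ≠ 0 := by intro h; linarith [h]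
  unfold den DD
  rw [Finset.mul_sum]
  apply Finset.sum_congr rfl
  intro i hi
  simp only [Finset.mem_range] at hi
  rw [div_pow, show (1-p)^n = (1-p)^(n-i)*(1-p)^i from by
    rw [← pow_add]; congr 1; omega]
  field_simp

lemma NN_rep (k n : ℕ) (x : ℝ) : NN k n x = (1+x) * BB k n x := by
  unfold NN nnc
  have split : ∀ i ∈ Finset.range (k+1),
      ((if i < k then bb k n i else 0) + (if i = 0 then 0 else bb k n (i-1))) * x^i
      = (if i < k then bb k n i * x^i else 0) + (if i = 0 then 0 else bb k n (i-1) * x^i) := by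
    intro i _
    by_cases h : i < k <;> by_cases h2 : i = 0 <;> simp [h, h2] <;> ring
  rw [Finset.sum_congr rfl split, Finset.sum_add_distrib]
  have h1 : ∑ i ∈ Finset.range (k+1), (if i < k then bb k n i * x^i else 0) = BB k n x := by
    unfold BB
    rw [Finset.sum_range_succ, if_neg (lt_irrefl k), add_zero]
    exact Finset.sum_congr rfl fun i hi => if_pos (Finset.mem_range.mp hi)
  have h2 : ∑ i ∈ Finset.range (k+1), (if i = 0 then 0 else bb k n (i-1) * x^i) = x * BB k n x := by
    rw [Finset.sum_range_succ']
    have hc : ∀ i ∈ Finset.range k,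
        (if i + 1 = 0 then (0:ℝ) else bb k n (i+1-1) * x^(i+1)) = x * (bb k n i * x^i) := by
      intro i _
      rw [if_neg (Nat.succ_ne_zero i), Nat.add_sub_cancel, pow_succ]
      ring
    rw [Finset.sum_congr rfl hc]
    simp [BB, Finset.mul_sum]
  rw [h1, h2]
  ring

lemma DD_rep (k n : ℕ) (x : ℝ) : DD k n x = ∑ i ∈ Finset.range (k+1), aa k n i * x^i := by
  unfold DD aa
  rw [Finset.sum_range_succ]
  simp only [lt_irrefl, if_neg, if_false, zero_mul, add_zero]
  apply Finset.sum_congr rfl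
  intro i hi
  simp [Finset.mem_range.mp hi]

lemma cross_key (k n : ℕ) (hk1 : 1 ≤ k) (hkn' : k ≤ n) {x y : ℝ} (hx : 0 < x) (hxy : x ≤ y) :
    NN k n y * DD k n x ≤ NN k n x * DD k n y := by
  have expand : NN k n y * DD k n x - NN k n x * DD k n y
      = ∑ i ∈ Finset.range (k+1), ∑ j ∈ Finset.range (k+1),
          nnc k n i * aa k n j * (y^i * x^j - x^i * y^j) := by
    rw [DD_rep, DD_rep]
    unfold NN
    rw [Finset.sum_mul_sum, Finset.sum_mul_sum, ← Finset.sum_sub_distrib]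
    apply Finset.sum_congr rfl
    intro i _
    rw [← Finset.sum_sub_distrib]
    apply Finset.sum_congr rfl
    intro j _
    ring
  have hps := pair_sum (K := k+1) (nnc k n) (aa k n)
    (fun i j hij hj => pair_ineq k n hk1 hkn' i j hij (by omega)) hx hxy
  linarith [expand ▸ hps]


lemma num_den_cross (k n : ℕ) (hk1 : 1 ≤ k) (hkn' : k ≤ n) {p1 p2 : ℝ}
    (h1 : p1 ∈ Set.Ioo (0:ℝ) 1) (h2 : p2 ∈ Set.Ioo (0:ℝ) 1) (hle : p1 ≤ p2) :
    num k n p2 * den k n p1 ≤ num k n p1 * den k n p2 := by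
  obtain ⟨hp10, hp11⟩ := h1
  obtain ⟨hp20, hp21⟩ := h2
  have hq1 : (0:ℝ) < 1 - p1 := by linarith
  have hq2 : (0:ℝ) < 1 - p2 := by linarith
  set x1 := p1 / (1 - p1) with hx1def
  set x2 := p2 / (1 - p2) with hx2def
  have hx1 : 0 < x1 := div_pos hp10 hq1
  have hx12 : x1 ≤ x2 := by
    rw [hx1def, hx2def, div_le_div_iff₀ hq1 hq2]
    nlinarith
  have hkey := cross_key k n hk1 hkn' hx1 hx12
  rw [NN_rep, NN_rep] at hkey
  have hb1 : (1 - p1) * (1 + x1) = 1 := by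
    rw [hx1def]; field_simp; ring
  have hb2 : (1 - p2) * (1 + x2) = 1 := by
    rw [hx2def]; field_simp; ring
  have c : (1-p1) * (BB k n x2 * DD k n x1) ≤ (1-p2) * (BB k n x1 * DD k n x2) := by
    have hm := mul_le_mul_of_nonneg_left hkey (le_of_lt (mul_pos hq1 hq2))
    have eL : (1-p1)*(1-p2)*((1+x2) * BB k n x2 * DD k n x1) = (1-p1) * (BB k n x2 * DD k n x1) := by
      linear_combination ((1-p1) * BB k n x2 * DD k n x1) * hb2
    have eR : (1-p1)*(1-p2)*((1+x1) * BB k n x1 * DD k n x2) = (1-p2) * (BB k n x1 * DD k n x2) := by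
      linear_combination ((1-p2) * BB k n x1 * DD k n x2) * hb1
    nlinarith [hm, eL, eR]
  have hn1 : 1 ≤ n := le_trans hk1 hkn'
  have e1 : (1-p1)^n = (1-p1)^(n-1) * (1-p1) := by
    rw [← pow_succ]; congr 1; omega
  have e2 : (1-p2)^n = (1-p2)^(n-1) * (1-p2) := by
    rw [← pow_succ]; congr 1; omega
  rw [num_rep k n hk1 hkn' ⟨hp20, hp21⟩, den_rep k n hk1 hkn' ⟨hp10, hp11⟩,
    num_rep k n hk1 hkn' ⟨hp10, hp11⟩, den_rep k n hk1 hkn' ⟨hp20, hp21⟩, e1, e2]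
  have hQ : (0:ℝ) ≤ (1-p1)^(n-1) * (1-p2)^(n-1) := by positivity
  calc (1-p2)^(n-1) * BB k n x2 * ((1-p1)^(n-1) * (1-p1) * DD k n x1)
      = ((1-p1)^(n-1) * (1-p2)^(n-1)) * ((1-p1) * (BB k n x2 * DD k n x1)) := by ring
    _ ≤ ((1-p1)^(n-1) * (1-p2)^(n-1)) * ((1-p2) * (BB k n x1 * DD k n x2)) :=
        mul_le_mul_of_nonneg_left c hQ
    _ = (1-p1)^(n-1) * BB k n x1 * ((1-p2)^(n-1) * (1-p2) * DD k n x2) := by ring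

/-- Lemma 2.3 (ii): `p R_{k|n}'(p) / R_{k|n}(p)` is positive and decreasing
on `(0,1)`. -/
theorem Rkn_log_deriv_pos_antitone
    (k n : ℕ) (hk1 : 1 ≤ k) (hkn' : k ≤ n) :
    (∀ p ∈ Set.Ioo (0:ℝ) 1, 0 ≤ p * deriv (Rkn k n) p / Rkn k n p) ∧
      AntitoneOn (fun p => p * deriv (Rkn k n) p / Rkn k n p)
        (Set.Ioo 0 1) := by
  constructor
  · intro p hp
    rw [f_eq_num_div_den k n hk1 hkn' hp]
    exact div_nonneg (num_nonneg k n hp) (den_pos k n hk1 hp).le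
  · intro p1 h1 p2 h2 hle
    simp only
    rw [f_eq_num_div_den k n hk1 hkn' h2, f_eq_num_div_den k n hk1 hkn' h1]
    rw [div_le_div_iff₀ (den_pos k n hk1 h2) (den_pos k n hk1 h1)]
    exact num_den_cross k n hk1 hkn' h1 h2 hle
end

section
/- Let X be a nonnegative random variable with absolutely continuous distribution supported on [0,∞), and let h:[0,1]→[0,1] be a differentiable dual distortion function. Let τ(X) be the lifetime with survival function F̄_{τ(X)}(x) = h(F̄_X(x)), and set R(p) = (1−p)·h'(p)/(1−h(p)). Then for every x ∈ (0,∞) with 0 < F_X(x) < 1, the cumulative reversed hazard function of τ(X) satisfies Δ̃_{τ(X)}(x) = −ln(1 − h(1−F_X(x))) = ∫_0^{−ln F_X(x)} R(1 − e^{−v}) dv. -/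
open MeasureTheory Set Topology Filter

/-- Cumulative distribution function of a distribution `μ` on `ℝ`. -/
noncomputable def cdf (μ : Measure ℝ) (x : ℝ) : ℝ := (μ (Set.Iic x)).toReal

/-- `R(p) = (1-p) h'(p) / (1 - h(p))` associated with a dual distortion
function `h` with derivative `h'`. -/
noncomputable def Rfun (h h' : ℝ → ℝ) (p : ℝ) : ℝ := (1 - p) * h' p / (1 - h p)

/-- Derivative of a function monotone on `[0,1]` is nonnegative at interior-left points. -/
lemma deriv_nonneg_of_monotoneOn {h : ℝ → ℝ} (hmono : MonotoneOn h (Set.Icc 0 1))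
    {p d : ℝ} (hp : p ∈ Set.Ico (0:ℝ) 1) (hder : HasDerivAt h d p) : 0 ≤ d := by
  haveI hne : (𝓝[Set.Ioo p 1] p).NeBot := by
    apply mem_closure_iff_nhdsWithin_neBot.mp
    rw [closure_Ioo (ne_of_lt hp.2)]
    exact ⟨le_rfl, hp.2.le⟩
  have hto : Filter.Tendsto (slope h p) (𝓝[Set.Ioo p 1] p) (𝓝 d) :=
    (hasDerivAt_iff_tendsto_slope.mp hder).mono_left
      (nhdsWithin_mono _ (fun y hy => Set.mem_compl_singleton_iff.mpr hy.1.ne'))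
  refine ge_of_tendsto hto (Filter.eventually_of_mem self_mem_nhdsWithin fun y hy => ?_)
  have h1 : h p ≤ h y := hmono ⟨hp.1, hp.2.le⟩ ⟨hp.1.trans hy.1.le, hy.2.le⟩ hy.1.le
  rw [slope_def_field]
  exact div_nonneg (by linarith) (by linarith [hy.1])

/-- Derivative of `v ↦ -log(1 - h(1 - e^{-v}))`. -/
lemma hasDerivAt_negLog_distortion (h h' : ℝ → ℝ)
    (hd : ∀ p ∈ Set.Icc (0:ℝ) 1, HasDerivAt h (h' p) p)
    {v : ℝ} (hp : (1 - Real.exp (-v)) ∈ Set.Icc (0:ℝ) 1)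
    (hne : h (1 - Real.exp (-v)) ≠ 1) :
    HasDerivAt (fun w => -Real.log (1 - h (1 - Real.exp (-w))))
      (Rfun h h' (1 - Real.exp (-v))) v := by
  have hphi : HasDerivAt (fun w : ℝ => 1 - Real.exp (-w)) (Real.exp (-v)) v := by
    simpa using ((hasDerivAt_id v).neg.exp).const_sub 1
  have hcomp : HasDerivAt (fun w => h (1 - Real.exp (-w)))
      (h' (1 - Real.exp (-v)) * Real.exp (-v)) v := (hd _ hp).comp v hphi
  have hc : HasDerivAt (fun w => 1 - h (1 - Real.exp (-w)))
      (-(h' (1 - Real.exp (-v)) * Real.exp (-v))) v := hcomp.const_sub 1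
  have hden : 1 - h (1 - Real.exp (-v)) ≠ 0 := sub_ne_zero_of_ne (Ne.symm hne)
  have hfin := (hc.log hden).neg
  refine hfin.congr_deriv ?_
  symm
  unfold Rfun
  rw [neg_div, neg_neg, show (1 - (1 - Real.exp (-v))) = Real.exp (-v) from by ring,
    mul_comm]

/-- Integral representation of the cumulative reversed hazard function of a
coherent system with dual distortion function `h`:
`Δ̃_{τ(X)}(x) = -ln(1 - h(1 - F_X(x))) = ∫_0^{-ln F_X(x)} R(1 - e^{-v}) dv`. -/
theorem cumRevHazard_coherent_integral_rep
    (μX : Measure ℝ) [IsProbabilityMeasure μX]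
    -- absolutely continuous distribution supported on [0,∞)
    (hXac : μX ≪ volume)
    (hXnn : μX (Set.Iio 0) = 0)
    (hXsupp : ∀ y > (0:ℝ), 0 < cdf μX y ∧ cdf μX y < 1)
    -- h is a differentiable dual distortion function
    (h h' : ℝ → ℝ)
    (hmap : Set.MapsTo h (Set.Icc 0 1) (Set.Icc 0 1))
    (hmono : MonotoneOn h (Set.Icc 0 1))
    (hcont : ContinuousOn h (Set.Icc 0 1))
    (h0 : h 0 = 0) (h1 : h 1 = 1)
    (hd : ∀ p ∈ Set.Icc (0:ℝ) 1, HasDerivAt h (h' p) p)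
    (x : ℝ) (hx : 0 < x)
    (hF0 : 0 < cdf μX x) (hF1 : cdf μX x < 1) :
    - Real.log (1 - h (1 - cdf μX x)) =
      ∫ v in (0:ℝ)..(- Real.log (cdf μX x)), Rfun h h' (1 - Real.exp (-v)) := by
  set F := cdf μX x with hF
  set T := -Real.log F with hT
  have hTpos : 0 < T := by
    have := Real.log_neg hF0 hF1
    rw [hT]; linarith
  have heT : Real.exp (-T) = F := by
    rw [hT, neg_neg, Real.exp_log hF0]
  have hphi_mem : ∀ v ∈ Set.Icc (0:ℝ) T, (1 - Real.exp (-v)) ∈ Set.Icc (0:ℝ) (1 - F) := by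
    intro v hv
    constructor
    · have : Real.exp (-v) ≤ 1 := by
        rw [← Real.exp_zero]; exact Real.exp_le_exp.mpr (by linarith [hv.1])
      linarith
    · have : F ≤ Real.exp (-v) := by
        rw [← heT]; exact Real.exp_le_exp.mpr (by linarith [hv.2])
      linarith
  have hsub : Set.Icc (0:ℝ) (1 - F) ⊆ Set.Icc (0:ℝ) 1 :=
    Set.Icc_subset_Icc le_rfl (by linarith)
  have h1F : (1 - F) ∈ Set.Icc (0:ℝ) 1 := ⟨by linarith, by linarith⟩
  have hnnIcc : ∀ v ∈ Set.Icc (0:ℝ) T, 0 ≤ Rfun h h' (1 - Real.exp (-v)) := by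
    intro v hv
    have hpm := hphi_mem v hv
    have hico : (1 - Real.exp (-v)) ∈ Set.Ico (0:ℝ) 1 :=
      ⟨hpm.1, by linarith [Real.exp_pos (-v)]⟩
    have hd' := deriv_nonneg_of_monotoneOn hmono hico (hd _ (hsub hpm))
    have hle := (hmap (hsub hpm)).2
    exact div_nonneg (mul_nonneg (by linarith [Real.exp_pos (-v)]) hd') (by linarith)
  by_cases hcase : h (1 - F) < 1
  · -- non-degenerate case : FTC
    have hderivIcc : ∀ v ∈ Set.Icc (0:ℝ) T,
        HasDerivAt (fun w => -Real.log (1 - h (1 - Real.exp (-w))))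
          (Rfun h h' (1 - Real.exp (-v))) v := by
      intro v hv
      have hpm := hphi_mem v hv
      refine hasDerivAt_negLog_distortion h h' hd (hsub hpm) (ne_of_lt ?_)
      exact lt_of_le_of_lt (hmono (hsub hpm) h1F hpm.2) hcase
    have hderivuIcc : ∀ v ∈ Set.uIcc (0:ℝ) T,
        HasDerivAt (fun w => -Real.log (1 - h (1 - Real.exp (-w))))
          (Rfun h h' (1 - Real.exp (-v))) v := by
      intro v hv
      exact hderivIcc v (by rwa [Set.uIcc_of_le hTpos.le] at hv)
    have hint : IntervalIntegrable (fun v => Rfun h h' (1 - Real.exp (-v))) volume 0 T := by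
      apply intervalIntegral.intervalIntegrable_deriv_of_nonneg (HasDerivAt.continuousOn hderivuIcc)
      · intro v hv
        rw [min_eq_left hTpos.le, max_eq_right hTpos.le] at hv
        exact hderivIcc v ⟨hv.1.le, hv.2.le⟩
      · intro v hv
        rw [min_eq_left hTpos.le, max_eq_right hTpos.le] at hv
        exact hnnIcc v ⟨hv.1.le, hv.2.le⟩
    have key := intervalIntegral.integral_eq_sub_of_hasDerivAt hderivuIcc hint
    rw [key]
    simp [heT, h0]
  · -- degenerate case : both sides are zero
    have hle1 : h (1 - F) ≤ 1 := (hmap h1F).2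
    have hEq : h (1 - F) = 1 := le_antisymm hle1 (not_lt.mp hcase)
    rw [hEq, sub_self, Real.log_zero, neg_zero]
    symm
    apply intervalIntegral.integral_undef
    intro Hint
    set S : Set ℝ := {q ∈ Set.Icc (0:ℝ) 1 | h q = 1} with hS
    have hSeq : S = Set.Icc (0:ℝ) 1 ∩ h ⁻¹' {1} := by
      ext q; simp [hS, Set.mem_sep_iff]
    have hSclosed : IsClosed S := by
      rw [hSeq]
      exact hcont.preimage_isClosed_of_isClosed isClosed_Icc isClosed_singleton
    have hSne : S.Nonempty := ⟨1 - F, h1F, hEq⟩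
    have hSbdd : BddBelow S := BddBelow.mono (fun q hq => hq.1) bddBelow_Icc
    set q0 := sInf S with hq0
    have hq0mem : q0 ∈ S := hSclosed.csInf_mem hSne hSbdd
    have hq0Icc : q0 ∈ Set.Icc (0:ℝ) 1 := hq0mem.1
    have hq0one : h q0 = 1 := hq0mem.2
    have hq0pos : 0 < q0 := by
      rcases lt_or_eq_of_le hq0Icc.1 with hlt | heq
      · exact hlt
      · exfalso; rw [← heq, h0] at hq0one; norm_num at hq0one
    have hq0le : q0 ≤ 1 - F := csInf_le hSbdd ⟨h1F, hEq⟩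
    have hltone : ∀ r ∈ Set.Ico (0:ℝ) q0, h r < 1 := by
      intro r hr
      have hrIcc : r ∈ Set.Icc (0:ℝ) 1 := ⟨hr.1, hr.2.le.trans hq0Icc.2⟩
      rcases lt_or_eq_of_le (hmap hrIcc).2 with hlt | heq
      · exact hlt
      · exact absurd (csInf_le hSbdd ⟨hrIcc, heq⟩) (not_le.mpr hr.2)
    set C := ∫ v in (0:ℝ)..T, Rfun h h' (1 - Real.exp (-v)) with hC
    have hbound : ∀ q ∈ Set.Ico (0:ℝ) q0, h q ≤ 1 - Real.exp (-C) := by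
      intro q hq
      have hq1 : q < 1 := lt_of_lt_of_le hq.2 hq0Icc.2
      have h1q : 0 < 1 - q := by linarith
      set b := -Real.log (1 - q) with hbdef
      have hb0 : 0 ≤ b := by
        have := Real.log_nonpos h1q.le (by linarith [hq.1] : 1 - q ≤ 1)
        rw [hbdef]; linarith
      have heb : Real.exp (-b) = 1 - q := by rw [hbdef, neg_neg, Real.exp_log h1q]
      have hbT : b ≤ T := by
        have hFle : F ≤ 1 - q := by linarith [lt_of_lt_of_le hq.2 hq0le]
        have := Real.log_le_log hF0 hFle
        rw [hbdef, hT]; linarith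
      have hderivb : ∀ v ∈ Set.uIcc (0:ℝ) b,
          HasDerivAt (fun w => -Real.log (1 - h (1 - Real.exp (-w))))
            (Rfun h h' (1 - Real.exp (-v))) v := by
        intro v hv
        rw [Set.uIcc_of_le hb0] at hv
        have hvT : v ∈ Set.Icc (0:ℝ) T := ⟨hv.1, hv.2.trans hbT⟩
        have hpm := hphi_mem v hvT
        have hphile : 1 - Real.exp (-v) ≤ q := by
          have : Real.exp (-b) ≤ Real.exp (-v) := Real.exp_le_exp.mpr (by linarith [hv.2])
          rw [heb] at this; linarith
        refine hasDerivAt_negLog_distortion h h' hd (hsub hpm) (ne_of_lt ?_)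
        exact hltone _ ⟨hpm.1, lt_of_le_of_lt hphile hq.2⟩
      have hintb : IntervalIntegrable (fun v => Rfun h h' (1 - Real.exp (-v))) volume 0 b :=
        Hint.mono_set (by
          rw [Set.uIcc_of_le hb0, Set.uIcc_of_le hTpos.le]
          exact Set.Icc_subset_Icc le_rfl hbT)
      have hkey := intervalIntegral.integral_eq_sub_of_hasDerivAt hderivb hintb
      have hmon : (∫ v in (0:ℝ)..b, Rfun h h' (1 - Real.exp (-v))) ≤ C := by
        rw [hC]
        refine intervalIntegral.integral_mono_interval le_rfl hb0 hbT ?_ Hint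
        filter_upwards [ae_restrict_mem measurableSet_Ioc] with v hv
        exact hnnIcc v ⟨hv.1.le, hv.2⟩
      rw [hkey] at hmon
      have hGb : -Real.log (1 - h q) ≤ C := by
        simpa [heb, h0] using hmon
      have hhq1 : h q < 1 := hltone q hq
      have h2 : -C ≤ Real.log (1 - h q) := by linarith
      have h3 : Real.exp (-C) ≤ 1 - h q := by
        calc Real.exp (-C) ≤ Real.exp (Real.log (1 - h q)) := Real.exp_le_exp.mpr h2
          _ = 1 - h q := Real.exp_log (by linarith)
      linarith
    haveI hneBot : (𝓝[Set.Ico (0:ℝ) q0] q0).NeBot := by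
      apply mem_closure_iff_nhdsWithin_neBot.mp
      rw [closure_Ico hq0pos.ne]
      exact ⟨hq0Icc.1, le_rfl⟩
    have htend : Filter.Tendsto h (𝓝[Set.Ico (0:ℝ) q0] q0) (𝓝 1) := by
      have htd := (hcont q0 hq0Icc).tendsto
      rw [hq0one] at htd
      exact htd.mono_left (nhdsWithin_mono _ (fun r hr => ⟨hr.1, hr.2.le.trans hq0Icc.2⟩))
    have hfin : (1:ℝ) ≤ 1 - Real.exp (-C) :=
      le_of_tendsto htend (Filter.eventually_of_mem self_mem_nhdsWithin fun q hq => hbound q hq)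
    linarith [Real.exp_pos (-C)]
end

section
/- Let h:[0,1]→[0,1] be a twice differentiable dual distortion function with h(p) > 0 and h'(p) > 0 for p∈(0,1), and set H(p) = p·h'(p)/h(p). Suppose (1−p)·H'(p)/H(p) is negative and decreasing in p∈(0,1). Then for any exponents 0 < z₁ < z₂ < 1, the ratio p ↦ H(p^{z₂})/H(p^{z₁}) is increasing in p∈(0,1); equivalently, if F̄ is any survival function, the kernel (x,z) ↦ H(F̄(x)^z) is RR₂ on (0,∞)×(0,1). -/
open Set

/-- `H(p) = p h'(p) / h(p)` associated with a dual distortion function `h`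
with derivative `h'`. -/
noncomputable def Hfun (h h' : ℝ → ℝ) (p : ℝ) : ℝ := p * h' p / h p

lemma B_hasDerivAt {u : ℝ} (hu : u ∈ Set.Ioo (0:ℝ) 1) :
    HasDerivAt (fun u : ℝ => u * Real.log u / (1 - u))
      (((Real.log u + 1) * (1 - u) - u * Real.log u * (-1)) / (1 - u) ^ 2) u := by
  have h1 : (1:ℝ) - u ≠ 0 := by have := hu.2; intro hc; linarith
  exact (Real.hasDerivAt_mul_log (ne_of_gt hu.1)).div ((hasDerivAt_id u).const_sub 1) h1

lemma B_antitone : AntitoneOn (fun u : ℝ => u * Real.log u / (1 - u)) (Set.Ioo 0 1) := by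
  apply antitoneOn_of_deriv_nonpos (convex_Ioo 0 1)
  · exact fun u hu => (B_hasDerivAt hu).differentiableAt.continuousAt.continuousWithinAt
  · rw [interior_Ioo]
    exact fun u hu => (B_hasDerivAt hu).differentiableAt.differentiableWithinAt
  · intro u hu
    rw [interior_Ioo] at hu
    rw [(B_hasDerivAt hu).deriv]
    apply div_nonpos_of_nonpos_of_nonneg
    · have hl : Real.log u ≤ u - 1 := Real.log_le_sub_one_of_pos hu.1
      have : (Real.log u + 1) * (1 - u) - u * Real.log u * (-1) = Real.log u + 1 - u := by
        ring
      rw [this]; linarith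
    · positivity

/-- If `(1-p) H'(p)/H(p)` is negative and decreasing on `(0,1)`, then for any
`0 < z₁ < z₂ < 1`, `p ↦ H(p^{z₂})/H(p^{z₁})` is increasing on `(0,1)`;
equivalently, for any survival function `Fbar`, the kernel
`(x,z) ↦ H(Fbar(x)^z)` is RR₂ on `(0,∞) × (0,1)`. -/
theorem Hfun_kernel_RR2
    (h h' h'' : ℝ → ℝ)
    -- h is a twice differentiable dual distortion function
    (hmap : Set.MapsTo h (Set.Icc 0 1) (Set.Icc 0 1))
    (hmono : MonotoneOn h (Set.Icc 0 1))
    (hcont : ContinuousOn h (Set.Icc 0 1))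
    (h0 : h 0 = 0) (h1 : h 1 = 1)
    (hd1 : ∀ p ∈ Set.Icc (0:ℝ) 1, HasDerivAt h (h' p) p)
    (hd2 : ∀ p ∈ Set.Icc (0:ℝ) 1, HasDerivAt h' (h'' p) p)
    -- h > 0 and h' > 0 on (0,1)
    (hpos : ∀ p ∈ Set.Ioo (0:ℝ) 1, 0 < h p)
    (hdpos : ∀ p ∈ Set.Ioo (0:ℝ) 1, 0 < h' p)
    -- (1-p) H'(p)/H(p) is negative and decreasing on (0,1)
    (cond_neg : ∀ p ∈ Set.Ioo (0:ℝ) 1,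
        (1 - p) * deriv (Hfun h h') p / Hfun h h' p ≤ 0)
    (cond_dec : AntitoneOn
        (fun p => (1 - p) * deriv (Hfun h h') p / Hfun h h' p) (Set.Ioo 0 1)) :
    -- the ratio H(p^{z₂})/H(p^{z₁}) is increasing in p ∈ (0,1)
    (∀ z₁ z₂ : ℝ, 0 < z₁ → z₁ < z₂ → z₂ < 1 →
      MonotoneOn (fun p => Hfun h h' (p ^ z₂) / Hfun h h' (p ^ z₁))
        (Set.Ioo 0 1)) ∧
    -- equivalently, the kernel (x,z) ↦ H(Fbar(x)^z) is RR₂ on (0,∞) × (0,1)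
    (∀ Fbar : ℝ → ℝ, AntitoneOn Fbar (Set.Ioi 0) →
      (∀ x ∈ Set.Ioi (0:ℝ), Fbar x ∈ Set.Ioo (0:ℝ) 1) →
      ∀ x₁ ∈ Set.Ioi (0:ℝ), ∀ x₂ ∈ Set.Ioi (0:ℝ), x₁ ≤ x₂ →
      ∀ z₁ ∈ Set.Ioo (0:ℝ) 1, ∀ z₂ ∈ Set.Ioo (0:ℝ) 1, z₁ ≤ z₂ →
        Hfun h h' (Fbar x₁ ^ z₁) * Hfun h h' (Fbar x₂ ^ z₂) ≤
          Hfun h h' (Fbar x₁ ^ z₂) * Hfun h h' (Fbar x₂ ^ z₁)) := by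
  -- positivity of H on (0,1)
  have Hpos : ∀ u ∈ Set.Ioo (0:ℝ) 1, 0 < Hfun h h' u := by
    intro u hu
    have := hpos u hu; have := hdpos u hu; have := hu.1
    unfold Hfun; positivity
  -- differentiability of H on (0,1)
  have HderivAt : ∀ u ∈ Set.Ioo (0:ℝ) 1, HasDerivAt (Hfun h h') (deriv (Hfun h h') u) u := by
    intro u hu
    have hu' : u ∈ Set.Icc (0:ℝ) 1 := Set.Ioo_subset_Icc_self hu
    have hD : HasDerivAt (fun p => p * h' p / h p)
        (((1 * h' u + u * h'' u) * h u - u * h' u * h' u) / h u ^ 2) u :=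
      ((hasDerivAt_id u).mul (hd2 u hu')).div (hd1 u hu') (ne_of_gt (hpos u hu))
    have : HasDerivAt (Hfun h h')
        (((1 * h' u + u * h'' u) * h u - u * h' u * h' u) / h u ^ 2) u := hD
    exact this.differentiableAt.hasDerivAt
  -- membership of p^z in (0,1)
  have mem_pow : ∀ p ∈ Set.Ioo (0:ℝ) 1, ∀ z : ℝ, 0 < z → p ^ z ∈ Set.Ioo (0:ℝ) 1 := by
    intro p hp z hz
    exact ⟨Real.rpow_pos_of_pos hp.1 z, Real.rpow_lt_one hp.1.le hp.2 hz⟩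
  -- the key inequality
  have key : ∀ p ∈ Set.Ioo (0:ℝ) 1, ∀ z₁ z₂ : ℝ, 0 < z₁ → z₁ ≤ z₂ →
      z₁ * p ^ z₁ * deriv (Hfun h h') (p ^ z₁) * Hfun h h' (p ^ z₂) ≤
        z₂ * p ^ z₂ * deriv (Hfun h h') (p ^ z₂) * Hfun h h' (p ^ z₁) := by
    intro p hp z₁ z₂ hz₁ hz₁₂
    have hz₂ : 0 < z₂ := lt_of_lt_of_le hz₁ hz₁₂
    set u₁ := p ^ z₁ with hu₁def
    set u₂ := p ^ z₂ with hu₂def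
    have hu₁ : u₁ ∈ Set.Ioo (0:ℝ) 1 := mem_pow p hp z₁ hz₁
    have hu₂ : u₂ ∈ Set.Ioo (0:ℝ) 1 := mem_pow p hp z₂ hz₂
    have hule : u₂ ≤ u₁ := Real.rpow_le_rpow_of_exponent_ge hp.1 hp.2.le hz₁₂
    have h1u₁ : (0:ℝ) < 1 - u₁ := by linarith [hu₁.2]
    have h1u₂ : (0:ℝ) < 1 - u₂ := by linarith [hu₂.2]
    set g₁ := (1 - u₁) * deriv (Hfun h h') u₁ / Hfun h h' u₁ with hg₁
    set g₂ := (1 - u₂) * deriv (Hfun h h') u₂ / Hfun h h' u₂ with hg₂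
    have hg₂0 : g₂ ≤ 0 := cond_neg u₂ hu₂
    have hg₁₂ : g₁ ≤ g₂ := cond_dec hu₂ hu₁ hule
    set a₁ := z₁ * u₁ / (1 - u₁) with ha₁
    set a₂ := z₂ * u₂ / (1 - u₂) with ha₂
    have ha₂pos : 0 < a₂ := by
      apply div_pos (mul_pos hz₂ hu₂.1) h1u₂
    -- a₂ ≤ a₁ via B antitone
    have ha₂₁ : a₂ ≤ a₁ := by
      have hlp : Real.log p < 0 := Real.log_neg hp.1 hp.2
      have hB : u₁ * Real.log u₁ / (1 - u₁) ≤ u₂ * Real.log u₂ / (1 - u₂) :=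
        B_antitone hu₂ hu₁ hule
      have e₁ : Real.log u₁ = z₁ * Real.log p := Real.log_rpow hp.1 z₁
      have e₂ : Real.log u₂ = z₂ * Real.log p := Real.log_rpow hp.1 z₂
      rw [e₁, e₂] at hB
      have key' : u₂ * (z₂ * Real.log p) / (1 - u₂) - u₁ * (z₁ * Real.log p) / (1 - u₁) ≥ 0 := by
        linarith
      have expand : u₂ * (z₂ * Real.log p) / (1 - u₂) - u₁ * (z₁ * Real.log p) / (1 - u₁)
          = (a₂ - a₁) * Real.log p := by
        rw [ha₁, ha₂]; field_simp
      rw [expand] at key'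
      nlinarith
    -- combine
    have habg : a₁ * g₁ ≤ a₂ * g₂ := by nlinarith
    have e₁ : a₁ * g₁ = z₁ * u₁ * deriv (Hfun h h') u₁ / Hfun h h' u₁ := by
      have hne : (1:ℝ) - u₁ ≠ 0 := ne_of_gt h1u₁
      have hHne : Hfun h h' u₁ ≠ 0 := ne_of_gt (Hpos u₁ hu₁)
      rw [ha₁, hg₁]
      field_simp
    have e₂ : a₂ * g₂ = z₂ * u₂ * deriv (Hfun h h') u₂ / Hfun h h' u₂ := by
      have hne : (1:ℝ) - u₂ ≠ 0 := ne_of_gt h1u₂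
      have hHne : Hfun h h' u₂ ≠ 0 := ne_of_gt (Hpos u₂ hu₂)
      rw [ha₂, hg₂]
      field_simp
    rw [e₁, e₂] at habg
    rw [div_le_div_iff₀ (Hpos u₁ hu₁) (Hpos u₂ hu₂)] at habg
    linarith
  -- Part 1
  have part1 : ∀ z₁ z₂ : ℝ, 0 < z₁ → z₁ < z₂ → z₂ < 1 →
      MonotoneOn (fun p => Hfun h h' (p ^ z₂) / Hfun h h' (p ^ z₁)) (Set.Ioo 0 1) := by
    intro z₁ z₂ hz₁ hz₁₂ hz₂1
    have hz₂ : 0 < z₂ := hz₁.trans hz₁₂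
    have hF : ∀ p ∈ Set.Ioo (0:ℝ) 1,
        HasDerivAt (fun p => Hfun h h' (p ^ z₂) / Hfun h h' (p ^ z₁))
          ((deriv (Hfun h h') (p ^ z₂) * (z₂ * p ^ (z₂ - 1)) * Hfun h h' (p ^ z₁) -
            Hfun h h' (p ^ z₂) * (deriv (Hfun h h') (p ^ z₁) * (z₁ * p ^ (z₁ - 1)))) /
            (Hfun h h' (p ^ z₁)) ^ 2) p := by
      intro p hp
      have hc2 : HasDerivAt (fun p : ℝ => Hfun h h' (p ^ z₂))
          (deriv (Hfun h h') (p ^ z₂) * (z₂ * p ^ (z₂ - 1))) p :=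
        by have := (HderivAt _ (mem_pow p hp z₂ hz₂)).comp p
            (Real.hasDerivAt_rpow_const (Or.inl (ne_of_gt hp.1))); exact this
      have hc1 : HasDerivAt (fun p : ℝ => Hfun h h' (p ^ z₁))
          (deriv (Hfun h h') (p ^ z₁) * (z₁ * p ^ (z₁ - 1))) p :=
        by have := (HderivAt _ (mem_pow p hp z₁ hz₁)).comp p
            (Real.hasDerivAt_rpow_const (Or.inl (ne_of_gt hp.1))); exact this
      exact hc2.div hc1 (ne_of_gt (Hpos _ (mem_pow p hp z₁ hz₁)))
    apply monotoneOn_of_deriv_nonneg (convex_Ioo 0 1)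
    · exact fun p hp => (hF p hp).differentiableAt.continuousAt.continuousWithinAt
    · rw [interior_Ioo]
      exact fun p hp => (hF p hp).differentiableAt.differentiableWithinAt
    · intro p hp
      rw [interior_Ioo] at hp
      rw [(hF p hp).deriv]
      apply div_nonneg _ (sq_nonneg _)
      have hkey := key p hp z₁ z₂ hz₁ hz₁₂.le
      have ep1 : p ^ (z₁ - 1) = p ^ z₁ / p := by
        rw [Real.rpow_sub hp.1, Real.rpow_one]
      have ep2 : p ^ (z₂ - 1) = p ^ z₂ / p := by
        rw [Real.rpow_sub hp.1, Real.rpow_one]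
      rw [ep1, ep2]
      have hrw : deriv (Hfun h h') (p ^ z₂) * (z₂ * (p ^ z₂ / p)) * Hfun h h' (p ^ z₁) -
          Hfun h h' (p ^ z₂) * (deriv (Hfun h h') (p ^ z₁) * (z₁ * (p ^ z₁ / p)))
          = (z₂ * p ^ z₂ * deriv (Hfun h h') (p ^ z₂) * Hfun h h' (p ^ z₁) -
             z₁ * p ^ z₁ * deriv (Hfun h h') (p ^ z₁) * Hfun h h' (p ^ z₂)) / p := by
        field_simp
      rw [hrw]
      exact div_nonneg (by linarith) hp.1.le
  refine ⟨part1, ?_⟩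
  -- Part 2
  intro Fbar hFanti hFmem x₁ hx₁ x₂ hx₂ hx₁₂ z₁ hz₁ z₂ hz₂ hz₁₂
  rcases eq_or_lt_of_le hz₁₂ with rfl | hzlt
  · ring_nf; exact le_refl _
  · have hq₁ : Fbar x₂ ∈ Set.Ioo (0:ℝ) 1 := hFmem x₂ hx₂
    have hq₂ : Fbar x₁ ∈ Set.Ioo (0:ℝ) 1 := hFmem x₁ hx₁
    have hqle : Fbar x₂ ≤ Fbar x₁ := hFanti hx₁ hx₂ hx₁₂
    have hmono := part1 z₁ z₂ hz₁.1 hzlt hz₂.2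
    have hr := hmono hq₁ hq₂ hqle
    simp only at hr
    -- hr : H(q₁^z₂)/H(q₁^z₁) ≤ H(q₂^z₂)/H(q₂^z₁)
    have h11 := Hpos _ (mem_pow _ hq₁ z₁ hz₁.1)
    have h21 := Hpos _ (mem_pow _ hq₂ z₁ hz₁.1)
    rw [div_le_div_iff₀ h11 h21] at hr
    linarith
end

section
/- Let h:[0,1]→[0,1] be a twice differentiable dual distortion function with h(p) < 1 and h'(p) > 0 for p∈(0,1), and set R(p) = (1−p)·h'(p)/(1−h(p)). Suppose p·R'(p)/R(p) is positive and decreasing in p∈(0,1). Then for any exponents 0 < z₁ < z₂ < 1, the ratio q ↦ R(1−q^{z₂})/R(1−q^{z₁}) is increasing in q∈(0,1); equivalently, if F is any (increasing) distribution function with values in (0,1), the kernel (x,z) ↦ R(1−F(x)^z) is TP₂ on (0,∞)×(0,1). -/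
open Set

/-- Slope of `log` from `1`: for `1 < r ≤ s`, `(r-1) log s ≤ (s-1) log r`. -/
lemma aux_secant {r s : ℝ} (hr : 1 < r) (hrs : r ≤ s) :
    (r - 1) * Real.log s ≤ Real.log r * (s - 1) := by
  rcases eq_or_lt_of_le hrs with rfl | hlt
  · nlinarith [Real.log_nonneg hr.le]
  · have h1 : (1:ℝ) ∈ Ioi (0:ℝ) := by norm_num
    have hrm : r ∈ Ioi (0:ℝ) := by simp; linarith
    have hsm : s ∈ Ioi (0:ℝ) := by simp; linarith
    have key := strictConcaveOn_log_Ioi.secant_strict_mono h1 hrm hsm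
      (by linarith) (by linarith) hlt
    rw [Real.log_one] at key
    have hr1 : (0:ℝ) < r - 1 := by linarith
    have hs1 : (0:ℝ) < s - 1 := by linarith
    rw [div_lt_div_iff₀ hs1 hr1] at key
    nlinarith [key]

/-- `t ↦ (-log t) * t / (1-t)` is monotone on `(0,1)`. -/
lemma aux_m_mono {a b : ℝ} (ha : 0 < a) (hab : a ≤ b) (hb : b < 1) :
    (-Real.log a) * a / (1 - a) ≤ (-Real.log b) * b / (1 - b) := by
  have hb0 : 0 < b := lt_of_lt_of_le ha hab
  have ha1 : a < 1 := lt_of_le_of_lt hab hb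
  have key := aux_secant (r := 1/b) (s := 1/a)
    (by rw [lt_div_iff₀ hb0]; linarith)
    (one_div_le_one_div_of_le ha hab)
  rw [one_div, one_div, Real.log_inv, Real.log_inv] at key
  have key2 := mul_le_mul_of_nonneg_left key (le_of_lt (mul_pos ha hb0))
  rw [div_le_div_iff₀ (by linarith : (0:ℝ) < 1 - a) (by linarith : (0:ℝ) < 1 - b)]
  have e1 : a * b * ((b⁻¹ - 1) * (-Real.log a)) = a * (1 - b) * (-Real.log a) := by
    field_simp
  have e2 : a * b * ((-Real.log b) * (a⁻¹ - 1)) = b * (1 - a) * (-Real.log b) := by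
    field_simp
  rw [e1, e2] at key2
  linarith [key2]

/-- Algebraic identity used to rewrite the logarithmic derivative. -/
lemma aux_eq {z c t p r R q : ℝ} (hq : q ≠ 0) (hc : c ≠ 0) (hp : p ≠ 0) (hR : R ≠ 0)
    (hzc : -Real.log t = z * c) :
    r * (z * (t / q)) / R = (-Real.log t) * t / p * (p * r / R) / (c * q) := by
  rw [hzc]
  field_simp

/-- If `p R'(p)/R(p)` is positive and decreasing on `(0,1)`, then for any
`0 < z₁ < z₂ < 1`, `q ↦ R(1-q^{z₂})/R(1-q^{z₁})` is increasing on `(0,1)`;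
equivalently, for any distribution function `F` with values in `(0,1)`, the
kernel `(x,z) ↦ R(1-F(x)^z)` is TP₂ on `(0,∞) × (0,1)`. -/
theorem Rfun_kernel_TP2
    (h h' h'' : ℝ → ℝ)
    -- h is a twice differentiable dual distortion function
    (hmap : Set.MapsTo h (Set.Icc 0 1) (Set.Icc 0 1))
    (hmono : MonotoneOn h (Set.Icc 0 1))
    (hcont : ContinuousOn h (Set.Icc 0 1))
    (h0 : h 0 = 0) (h1 : h 1 = 1)
    (hd1 : ∀ p ∈ Set.Icc (0:ℝ) 1, HasDerivAt h (h' p) p)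
    (hd2 : ∀ p ∈ Set.Icc (0:ℝ) 1, HasDerivAt h' (h'' p) p)
    -- h < 1 and h' > 0 on (0,1)
    (hlt1 : ∀ p ∈ Set.Ioo (0:ℝ) 1, h p < 1)
    (hdpos : ∀ p ∈ Set.Ioo (0:ℝ) 1, 0 < h' p)
    -- p R'(p)/R(p) is positive and decreasing on (0,1)
    (cond_pos : ∀ p ∈ Set.Ioo (0:ℝ) 1,
        0 ≤ p * deriv (Rfun h h') p / Rfun h h' p)
    (cond_dec : AntitoneOn
        (fun p => p * deriv (Rfun h h') p / Rfun h h' p) (Set.Ioo 0 1)) :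
    -- the ratio R(1-q^{z₂})/R(1-q^{z₁}) is increasing in q ∈ (0,1)
    (∀ z₁ z₂ : ℝ, 0 < z₁ → z₁ < z₂ → z₂ < 1 →
      MonotoneOn (fun q => Rfun h h' (1 - q ^ z₂) / Rfun h h' (1 - q ^ z₁))
        (Set.Ioo 0 1)) ∧
    -- equivalently, the kernel (x,z) ↦ R(1-F(x)^z) is TP₂ on (0,∞) × (0,1)
    (∀ F : ℝ → ℝ, MonotoneOn F (Set.Ioi 0) →
      (∀ x ∈ Set.Ioi (0:ℝ), F x ∈ Set.Ioo (0:ℝ) 1) →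
      ∀ x₁ ∈ Set.Ioi (0:ℝ), ∀ x₂ ∈ Set.Ioi (0:ℝ), x₁ ≤ x₂ →
      ∀ z₁ ∈ Set.Ioo (0:ℝ) 1, ∀ z₂ ∈ Set.Ioo (0:ℝ) 1, z₁ ≤ z₂ →
        Rfun h h' (1 - F x₁ ^ z₂) * Rfun h h' (1 - F x₂ ^ z₁) ≤
          Rfun h h' (1 - F x₁ ^ z₁) * Rfun h h' (1 - F x₂ ^ z₂)) := by
  -- positivity of R on (0,1)
  have hRpos : ∀ p ∈ Ioo (0:ℝ) 1, 0 < Rfun h h' p := by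
    intro p hp
    have h1p : (0:ℝ) < 1 - p := by linarith [hp.2]
    have h2p : 0 < h' p := hdpos p hp
    have h3p : (0:ℝ) < 1 - h p := by linarith [hlt1 p hp]
    show (0:ℝ) < (1 - p) * h' p / (1 - h p)
    exact div_pos (mul_pos h1p h2p) h3p
  -- differentiability of R on (0,1)
  have hRdiff : ∀ p ∈ Ioo (0:ℝ) 1, DifferentiableAt ℝ (Rfun h h') p := by
    intro p hp
    have hp' : p ∈ Icc (0:ℝ) 1 := ⟨hp.1.le, hp.2.le⟩
    have hne : (1:ℝ) - h p ≠ 0 := ne_of_gt (by linarith [hlt1 p hp])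
    have hnum : HasDerivAt (fun p : ℝ => (1 - p) * h' p)
        ((0 - 1) * h' p + (1 - p) * h'' p) p :=
      ((hasDerivAt_const p (1:ℝ)).sub (hasDerivAt_id p)).mul (hd2 p hp')
    have hden : HasDerivAt (fun p : ℝ => 1 - h p) (0 - h' p) p :=
      (hasDerivAt_const p (1:ℝ)).sub (hd1 p hp')
    exact (hnum.div hden hne).differentiableAt
  have hRderiv : ∀ p ∈ Ioo (0:ℝ) 1, HasDerivAt (Rfun h h') (deriv (Rfun h h') p) p :=
    fun p hp => (hRdiff p hp).hasDerivAt
  -- membership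
  have hmem : ∀ z : ℝ, 0 < z → ∀ q ∈ Ioo (0:ℝ) 1, (1 - q ^ z) ∈ Ioo (0:ℝ) 1 := by
    intro z hz q hq
    have h1 : q ^ z < 1 := Real.rpow_lt_one hq.1.le hq.2 hz
    have h2 : 0 < q ^ z := Real.rpow_pos_of_pos hq.1 z
    exact ⟨by linarith, by linarith⟩
  -- derivative of the log of the composed map
  have hLog : ∀ z : ℝ, 0 < z → ∀ q ∈ Ioo (0:ℝ) 1,
      HasDerivAt (fun q => Real.log (Rfun h h' (1 - q ^ z)))
        (deriv (Rfun h h') (1 - q ^ z) * (0 - z * q ^ (z - 1)) / Rfun h h' (1 - q ^ z)) q := by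
    intro z hz q hq
    have hrp : HasDerivAt (fun q : ℝ => q ^ z) (z * q ^ (z - 1)) q :=
      Real.hasDerivAt_rpow_const (Or.inl hq.1.ne')
    have hsub : HasDerivAt (fun q : ℝ => 1 - q ^ z) (0 - z * q ^ (z - 1)) q :=
      (hasDerivAt_const q (1:ℝ)).sub hrp
    have hcomp := (hRderiv _ (hmem z hz q hq)).comp q hsub
    exact hcomp.log (ne_of_gt (hRpos _ (hmem z hz q hq)))
  -- the core derivative inequality
  have hcore : ∀ z₁ z₂ : ℝ, 0 < z₁ → z₁ < z₂ → z₂ < 1 → ∀ q ∈ Ioo (0:ℝ) 1,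
      deriv (Rfun h h') (1 - q ^ z₂) * (z₂ * q ^ (z₂ - 1)) / Rfun h h' (1 - q ^ z₂) ≤
      deriv (Rfun h h') (1 - q ^ z₁) * (z₁ * q ^ (z₁ - 1)) / Rfun h h' (1 - q ^ z₁) := by
    intro z₁ z₂ hz₁ hz₁₂ hz₂ q hq
    have hq0 := hq.1
    have hz₂0 : 0 < z₂ := hz₁.trans hz₁₂
    have ht₁0 : 0 < q ^ z₁ := Real.rpow_pos_of_pos hq0 z₁
    have ht₂0 : 0 < q ^ z₂ := Real.rpow_pos_of_pos hq0 z₂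
    have ht₁1 : q ^ z₁ < 1 := Real.rpow_lt_one hq0.le hq.2 hz₁
    have ht₂₁ : q ^ z₂ < q ^ z₁ := Real.rpow_lt_rpow_of_exponent_gt hq0 hq.2 hz₁₂
    have hp₁ : (1 - q ^ z₁) ∈ Ioo (0:ℝ) 1 := ⟨by linarith, by linarith⟩
    have hp₂ : (1 - q ^ z₂) ∈ Ioo (0:ℝ) 1 := ⟨by linarith, by linarith⟩
    have hψle := cond_dec hp₁ hp₂ (by linarith)
    simp only at hψle
    have hψ₁0 := cond_pos _ hp₁
    have hψ₂0 := cond_pos _ hp₂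
    have hm : (-Real.log (q ^ z₂)) * q ^ z₂ / (1 - q ^ z₂) ≤
        (-Real.log (q ^ z₁)) * q ^ z₁ / (1 - q ^ z₁) := aux_m_mono ht₂0 ht₂₁.le ht₁1
    have hm₁0 : 0 ≤ (-Real.log (q ^ z₁)) * q ^ z₁ / (1 - q ^ z₁) := by
      have hl : Real.log (q ^ z₁) ≤ 0 := Real.log_nonpos ht₁0.le ht₁1.le
      exact div_nonneg (mul_nonneg (by linarith) ht₁0.le) (by linarith)
    have hmm := mul_le_mul hm hψle hψ₂0 hm₁0
    have hlogq : Real.log q < 0 := Real.log_neg hq0 hq.2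
    have hc : (0:ℝ) < -Real.log q := by linarith
    have hLc₁ : -Real.log (q ^ z₁) = z₁ * -Real.log q := by
      rw [Real.log_rpow hq0]; ring
    have hLc₂ : -Real.log (q ^ z₂) = z₂ * -Real.log q := by
      rw [Real.log_rpow hq0]; ring
    have hpow₁ : q ^ (z₁ - 1) = q ^ z₁ / q := by
      rw [Real.rpow_sub hq0, Real.rpow_one]
    have hpow₂ : q ^ (z₂ - 1) = q ^ z₂ / q := by
      rw [Real.rpow_sub hq0, Real.rpow_one]
    rw [hpow₁, hpow₂]
    rw [aux_eq hq0.ne' hc.ne' (ne_of_gt hp₁.1) (ne_of_gt (hRpos _ hp₁)) hLc₁,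
        aux_eq hq0.ne' hc.ne' (ne_of_gt hp₂.1) (ne_of_gt (hRpos _ hp₂)) hLc₂]
    have hcq : (0:ℝ) < -Real.log q * q := mul_pos hc hq0
    exact (div_le_div_iff_of_pos_right hcq).mpr hmm
  -- part 1: monotonicity of the ratio
  have key : ∀ z₁ z₂ : ℝ, 0 < z₁ → z₁ < z₂ → z₂ < 1 →
      MonotoneOn (fun q => Rfun h h' (1 - q ^ z₂) / Rfun h h' (1 - q ^ z₁))
        (Ioo 0 1) := by
    intro z₁ z₂ hz₁ hz₁₂ hz₂
    have hz₂0 : 0 < z₂ := hz₁.trans hz₁₂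
    have hio : interior (Ioo (0:ℝ) 1) = Ioo 0 1 := isOpen_Ioo.interior_eq
    have hfder : ∀ q ∈ Ioo (0:ℝ) 1,
        HasDerivAt (fun q => Real.log (Rfun h h' (1 - q ^ z₂)) -
            Real.log (Rfun h h' (1 - q ^ z₁)))
          (deriv (Rfun h h') (1 - q ^ z₂) * (0 - z₂ * q ^ (z₂ - 1)) / Rfun h h' (1 - q ^ z₂) -
           deriv (Rfun h h') (1 - q ^ z₁) * (0 - z₁ * q ^ (z₁ - 1)) / Rfun h h' (1 - q ^ z₁)) q :=
      fun q hq => (hLog z₂ hz₂0 q hq).sub (hLog z₁ hz₁ q hq)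
    have hfmono : MonotoneOn (fun q => Real.log (Rfun h h' (1 - q ^ z₂)) -
        Real.log (Rfun h h' (1 - q ^ z₁))) (Ioo 0 1) := by
      apply monotoneOn_of_deriv_nonneg (convex_Ioo 0 1)
      · intro q hq
        exact (hfder q hq).continuousAt.continuousWithinAt
      · rw [hio]
        intro q hq
        exact (hfder q hq).differentiableAt.differentiableWithinAt
      · rw [hio]
        intro q hq
        rw [(hfder q hq).deriv]
        have hco := hcore z₁ z₂ hz₁ hz₁₂ hz₂ q hq
        have e : ∀ r R X : ℝ, r * (0 - X) / R = -(r * X / R) := by intros; ring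
        rw [e, e]
        linarith [hco]
    intro q₁ hq₁ q₂ hq₂ hle
    have E : ∀ q ∈ Ioo (0:ℝ) 1, Rfun h h' (1 - q ^ z₂) / Rfun h h' (1 - q ^ z₁)
        = Real.exp (Real.log (Rfun h h' (1 - q ^ z₂)) - Real.log (Rfun h h' (1 - q ^ z₁))) := by
      intro q hq
      rw [Real.exp_sub, Real.exp_log (hRpos _ (hmem z₂ hz₂0 q hq)),
        Real.exp_log (hRpos _ (hmem z₁ hz₁ q hq))]
    show Rfun h h' (1 - q₁ ^ z₂) / Rfun h h' (1 - q₁ ^ z₁) ≤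
      Rfun h h' (1 - q₂ ^ z₂) / Rfun h h' (1 - q₂ ^ z₁)
    rw [E q₁ hq₁, E q₂ hq₂]
    exact Real.exp_le_exp.2 (hfmono hq₁ hq₂ hle)
  refine ⟨key, ?_⟩
  -- part 2: TP₂ property
  intro F hF hFr x₁ hx₁ x₂ hx₂ hx z₁ hz₁ z₂ hz₂ hz
  rcases eq_or_lt_of_le hz with rfl | hzlt
  · exact le_of_eq (by ring)
  · have hq₁ := hFr x₁ hx₁
    have hq₂ := hFr x₂ hx₂
    have hFle : F x₁ ≤ F x₂ := hF hx₁ hx₂ hx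
    have hmono2 := key z₁ z₂ hz₁.1 hzlt hz₂.2 hq₁ hq₂ hFle
    simp only at hmono2
    rw [div_le_div_iff₀ (hRpos _ (hmem z₁ hz₁.1 _ hq₁)) (hRpos _ (hmem z₁ hz₁.1 _ hq₂))]
      at hmono2
    linarith [hmono2]
end

section
/- For real numbers a and d with 0 ≤ d < a, the inequality (1−p^a)/(1−p^d) ≥ (a/d)·p^{a−d} holds for all p∈(0,1) (with the convention that the right-hand side is interpreted via a/0 = ∞ only when d > 0; for d = 0 the left side is interpreted as +∞). Equivalently, for 0 < d < a and all p∈(0,1): d·(1−p^a)·p^{d−1} ≥ a·(1−p^d)·p^{a−1}. -/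
open Set Real

/-- Monotonicity of `(e^u - 1)/u`, in product form. -/
lemma exp_ratio_mono (u v : ℝ) (hu : 0 < u) (huv : u ≤ v) :
    v * (Real.exp u - 1) ≤ u * (Real.exp v - 1) := by
  have hv : 0 < v := lt_of_lt_of_le hu huv
  have ha0 : (0:ℝ) ≤ 1 - u / v := by
    rw [sub_nonneg]; exact div_le_one_of_le₀ huv hv.le
  have hb0 : (0:ℝ) ≤ u / v := by positivity
  have hab : (1 - u / v) + u / v = 1 := by ring
  have h := convexOn_exp.2 (Set.mem_univ (0:ℝ)) (Set.mem_univ v) ha0 hb0 hab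
  simp only [smul_eq_mul, mul_zero, zero_add, Real.exp_zero, mul_one] at h
  rw [div_mul_cancel₀ u hv.ne'] at h
  have h2 := mul_le_mul_of_nonneg_left h hv.le
  have e : v * ((1 - u / v) + u / v * Real.exp v) = (v - u) + u * Real.exp v := by
    field_simp
  nlinarith [h2, e]

/-- The power-function inequality `(1-p^a)/(1-p^d) ≥ (a/d) p^{a-d}` for
`0 < d < a` and `p ∈ (0,1)`, together with its equivalent product form
`d (1-p^a) p^{d-1} ≥ a (1-p^d) p^{a-1}`, which holds for all `0 ≤ d < a`. -/
theorem power_ratio_inequality (a d : ℝ) (hd : 0 ≤ d) (hda : d < a) :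
    (∀ p ∈ Set.Ioo (0:ℝ) 1, 0 < d →
      (a / d) * p ^ (a - d) ≤ (1 - p ^ a) / (1 - p ^ d)) ∧
    (∀ p ∈ Set.Ioo (0:ℝ) 1,
      a * (1 - p ^ d) * p ^ (a - 1) ≤ d * (1 - p ^ a) * p ^ (d - 1)) := by
  have prod : ∀ p ∈ Set.Ioo (0:ℝ) 1,
      a * (1 - p ^ d) * p ^ (a - 1) ≤ d * (1 - p ^ a) * p ^ (d - 1) := by
    intro p hp
    obtain ⟨hp0, hp1⟩ := hp
    rcases hd.eq_or_lt with h0 | h0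
    · rw [← h0]
      simp [Real.rpow_zero]
    · have ha : 0 < a := h0.trans hda
      have hlog : Real.log p < 0 := Real.log_neg hp0 hp1
      set t := -Real.log p with ht_def
      have ht : 0 < t := by simp only [ht_def]; linarith
      have hrw : ∀ x : ℝ, p ^ x = Real.exp (-(t * x)) := by
        intro x
        rw [Real.rpow_def_of_pos hp0, ht_def]
        ring_nf
      set A := Real.exp (t * a) with hA_def
      set D := Real.exp (t * d) with hD_def
      have hApos : 0 < A := Real.exp_pos _
      have hDpos : 0 < D := Real.exp_pos _
      have hk := exp_ratio_mono (t * d) (t * a) (by positivity)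
        (by nlinarith)
      have hk' : a * (D - 1) ≤ d * (A - 1) := by
        have hgoal : t * (a * (D - 1)) ≤ t * (d * (A - 1)) := by
          rw [hA_def, hD_def]; nlinarith [hk]
        exact le_of_mul_le_mul_left hgoal ht
      rw [hrw a, hrw d, hrw (a - 1), hrw (d - 1)]
      have ea : Real.exp (-(t * (a - 1))) = A⁻¹ * Real.exp t := by
        rw [← Real.exp_neg, ← Real.exp_add]; ring_nf
      have ed : Real.exp (-(t * (d - 1))) = D⁻¹ * Real.exp t := by
        rw [← Real.exp_neg, ← Real.exp_add]; ring_nf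
      have ea' : Real.exp (-(t * a)) = A⁻¹ := by rw [← Real.exp_neg]
      have ed' : Real.exp (-(t * d)) = D⁻¹ := by rw [← Real.exp_neg]
      rw [ea, ed, ea', ed']
      have h2 : a * (D - 1) * (A⁻¹ * D⁻¹ * Real.exp t) ≤
          d * (A - 1) * (A⁻¹ * D⁻¹ * Real.exp t) :=
        mul_le_mul_of_nonneg_right hk' (by positivity)
      have hDi : (1:ℝ) - D⁻¹ = (D - 1) * D⁻¹ := by
        rw [sub_mul, mul_inv_cancel₀ hDpos.ne', one_mul]
      have hAi : (1:ℝ) - A⁻¹ = (A - 1) * A⁻¹ := by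
        rw [sub_mul, mul_inv_cancel₀ hApos.ne', one_mul]
      have e1 : a * (1 - D⁻¹) * (A⁻¹ * Real.exp t)
          = a * (D - 1) * (A⁻¹ * D⁻¹ * Real.exp t) := by
        rw [hDi]; ring
      have e2 : d * (1 - A⁻¹) * (D⁻¹ * Real.exp t)
          = d * (A - 1) * (A⁻¹ * D⁻¹ * Real.exp t) := by
        rw [hAi]; ring
      rw [e1, e2]
      exact h2
  refine ⟨?_, prod⟩
  intro p hp hd0
  obtain ⟨hp0, hp1⟩ := hp
  have this' := prod p ⟨hp0, hp1⟩
  have h1d : 0 < 1 - p ^ d := by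
    have : p ^ d < 1 := Real.rpow_lt_one hp0.le hp1 hd0
    linarith
  have hpd1 : (0:ℝ) < p ^ (d - 1) := Real.rpow_pos_of_pos hp0 _
  have hrw2 : p ^ (a - 1) = p ^ (a - d) * p ^ (d - 1) := by
    rw [← Real.rpow_add hp0]; ring_nf
  rw [hrw2] at this'
  rw [le_div_iff₀ h1d]
  have h3 : (a / d * p ^ (a - d) * (1 - p ^ d)) * (d * p ^ (d - 1)) ≤
      (1 - p ^ a) * (d * p ^ (d - 1)) := by
    have e : (a / d * p ^ (a - d) * (1 - p ^ d)) * (d * p ^ (d - 1))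
        = a * (1 - p ^ d) * (p ^ (a - d) * p ^ (d - 1)) := by
      field_simp
    rw [e, show (1 - p ^ a) * (d * p ^ (d - 1)) = d * (1 - p ^ a) * p ^ (d - 1) from by ring]
    exact this'
  exact le_of_mul_le_mul_right h3 (by positivity)
end

section
/- Let a and b be real numbers with 1 ≤ b ≤ a, and define R₁(p) = a(1−p)p^{a−1}/(1−p^a) and R₂(p) = b(1−p)p^{b−1}/(1−p^b) for p∈(0,1) (these are the functions R_h(p) = (1−p)h'(p)/(1−h(p)) for the power distortion functions h₁(p)=p^a and h₂(p)=p^b). Then R₁(p)/R₂(p) = (a/b)·(1 − (1−p^{a−b})/(1−p^a)) is increasing in p∈(0,1). -/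
open Set Real

lemma phi_mono : MonotoneOn (fun x : ℝ => -(x * Real.log x) / (1 - x)) (Set.Ioo 0 1) := by
  have hconv : Convex ℝ (Set.Ioo (0:ℝ) 1) := convex_Ioo 0 1
  have hder : ∀ x ∈ Set.Ioo (0:ℝ) 1, HasDerivAt (fun x : ℝ => -(x * Real.log x) / (1 - x))
      (((-(1 * Real.log x + x * x⁻¹)) * (1 - x) - (-(x * Real.log x)) * (0 - 1)) / (1 - x) ^ 2) x := by
    intro x hx
    have hx0 : x ≠ 0 := ne_of_gt hx.1
    have hx1 : (1 : ℝ) - x ≠ 0 := by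
      have := hx.2; intro h; linarith [sub_eq_zero.mp h]
    exact (((hasDerivAt_id x).mul (Real.hasDerivAt_log hx0)).neg).div
      ((hasDerivAt_const x 1).sub (hasDerivAt_id x)) hx1
  apply monotoneOn_of_deriv_nonneg hconv
  · exact fun x hx => ((hder x hx).continuousAt).continuousWithinAt
  · rw [interior_Ioo]
    exact fun x hx => ((hder x hx).differentiableAt).differentiableWithinAt
  · rw [interior_Ioo]
    intro x hx
    rw [(hder x hx).deriv]
    apply div_nonneg _ (sq_nonneg _)
    have hlog : Real.log x ≤ x - 1 := Real.log_le_sub_one_of_pos hx.1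
    have : x⁻¹ * x = 1 := inv_mul_cancel₀ (ne_of_gt hx.1)
    nlinarith [hx.1, hx.2]

lemma key_ineq {p q s : ℝ} (hp0 : 0 < p) (hpq : p ≤ q) (hq1 : q < 1) (hs : 0 < s) :
    (-(p ^ s * Real.log p)) * (1 - q ^ s) ≤ (-(q ^ s * Real.log q)) * (1 - p ^ s) := by
  have hq0 : 0 < q := lt_of_lt_of_le hp0 hpq
  have hps : (0:ℝ) < p ^ s := Real.rpow_pos_of_pos hp0 s
  have hqs : (0:ℝ) < q ^ s := Real.rpow_pos_of_pos hq0 s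
  have hps1 : p ^ s < 1 := Real.rpow_lt_one hp0.le (lt_of_le_of_lt hpq hq1) hs
  have hqs1 : q ^ s < 1 := Real.rpow_lt_one hq0.le hq1 hs
  have hle : p ^ s ≤ q ^ s := Real.rpow_le_rpow hp0.le hpq hs.le
  have hmem1 : p ^ s ∈ Set.Ioo (0:ℝ) 1 := ⟨hps, hps1⟩
  have hmem2 : q ^ s ∈ Set.Ioo (0:ℝ) 1 := ⟨hqs, hqs1⟩
  have := phi_mono hmem1 hmem2 hle
  simp only at this
  rw [div_le_div_iff₀ (by linarith) (by linarith)] at this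
  rw [Real.log_rpow hp0, Real.log_rpow hq0] at this
  have h2 : s * (-(p ^ s * Real.log p) * (1 - q ^ s)) ≤ s * (-(q ^ s * Real.log q) * (1 - p ^ s)) := by
    nlinarith [this]
  exact le_of_mul_le_mul_left h2 hs

lemma H_mono {p q : ℝ} (hp0 : 0 < p) (hpq : p ≤ q) (hq1 : q < 1) :
    MonotoneOn (fun s : ℝ => (1 - q ^ s) / (1 - p ^ s)) (Set.Ioi 0) := by
  have hq0 : 0 < q := lt_of_lt_of_le hp0 hpq
  have hder : ∀ s ∈ Set.Ioi (0:ℝ), HasDerivAt (fun s : ℝ => (1 - q ^ s) / (1 - p ^ s))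
      (((0 - q ^ s * Real.log q) * (1 - p ^ s) - (1 - q ^ s) * (0 - p ^ s * Real.log p)) / (1 - p ^ s) ^ 2) s := by
    intro s hs
    have hps1 : p ^ s < 1 := Real.rpow_lt_one hp0.le (lt_of_le_of_lt hpq hq1) hs
    exact (((hasDerivAt_const s (1:ℝ)).sub (Real.hasStrictDerivAt_const_rpow hq0 s).hasDerivAt)).div
      ((hasDerivAt_const s (1:ℝ)).sub (Real.hasStrictDerivAt_const_rpow hp0 s).hasDerivAt)
      (by intro h; rw [sub_eq_zero] at h; linarith [h.symm])
  apply monotoneOn_of_deriv_nonneg (convex_Ioi 0)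
  · exact fun s hs => ((hder s hs).continuousAt).continuousWithinAt
  · rw [interior_Ioi]
    exact fun s hs => ((hder s hs).differentiableAt).differentiableWithinAt
  · rw [interior_Ioi]
    intro s hs
    rw [(hder s hs).deriv]
    apply div_nonneg _ (sq_nonneg _)
    have := key_ineq hp0 hpq hq1 hs
    nlinarith [this]

lemma F_antitone {a b : ℝ} (hb : 1 ≤ b) (hba : b ≤ a) :
    AntitoneOn (fun p : ℝ => (1 - p ^ (a - b)) / (1 - p ^ a)) (Set.Ioo 0 1) := by
  intro p hp q hq hpq
  simp only
  have hq0 : 0 < q := hq.1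
  have hp0 : 0 < p := hp.1
  have hq1 : q < 1 := hq.2
  have ha0 : (0:ℝ) < a := by linarith
  have hpa : p ^ a < 1 := Real.rpow_lt_one hp0.le hp.2 ha0
  have hqa : q ^ a < 1 := Real.rpow_lt_one hq0.le hq1 ha0
  rcases eq_or_lt_of_le (sub_nonneg.mpr hba) with hc | hc
  · rw [← hc, Real.rpow_zero, Real.rpow_zero, sub_self, zero_div, zero_div]
  · have hpc : p ^ (a - b) < 1 := Real.rpow_lt_one hp0.le hp.2 hc
    have hqc : q ^ (a - b) < 1 := Real.rpow_lt_one hq0.le hq1 hc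
    have hH := H_mono hp0 hpq hq1 (Set.mem_Ioi.mpr hc) (Set.mem_Ioi.mpr ha0) (by linarith)
    simp only at hH
    rw [div_le_div_iff₀ (by linarith) (by linarith)] at hH
    rw [div_le_div_iff₀ (by linarith) (by linarith)]
    nlinarith [hH]

/-- For the power dual distortion functions `h₁(p) = p^a` and `h₂(p) = p^b`
with `1 ≤ b ≤ a` (Gumbel–Hougaard series systems), the ratio
`R₁(p)/R₂(p)` of `Rᵢ(p) = (1-p) hᵢ'(p)/(1-hᵢ(p))` equals
`(a/b)(1 - (1-p^{a-b})/(1-p^a))` and is increasing on `(0,1)`. -/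
theorem power_distortion_R_ratio_monotone (a b : ℝ) (hb : 1 ≤ b) (hba : b ≤ a) :
    (∀ p ∈ Set.Ioo (0:ℝ) 1,
      (a * (1 - p) * p ^ (a - 1) / (1 - p ^ a)) /
          (b * (1 - p) * p ^ (b - 1) / (1 - p ^ b)) =
        (a / b) * (1 - (1 - p ^ (a - b)) / (1 - p ^ a))) ∧
    MonotoneOn
      (fun p =>
        (a * (1 - p) * p ^ (a - 1) / (1 - p ^ a)) /
          (b * (1 - p) * p ^ (b - 1) / (1 - p ^ b)))
      (Set.Ioo 0 1) := by
  have ha0 : (0:ℝ) < a := by linarith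
  have hb0 : (0:ℝ) < b := by linarith
  have key : ∀ p ∈ Set.Ioo (0:ℝ) 1,
      (a * (1 - p) * p ^ (a - 1) / (1 - p ^ a)) /
          (b * (1 - p) * p ^ (b - 1) / (1 - p ^ b)) =
        (a / b) * (1 - (1 - p ^ (a - b)) / (1 - p ^ a)) := by
    intro p hp
    have hp0 : 0 < p := hp.1
    have hpa : p ^ a < 1 := Real.rpow_lt_one hp0.le hp.2 ha0
    have hpb : p ^ b < 1 := Real.rpow_lt_one hp0.le hp.2 hb0
    have hpa0 : (0:ℝ) < p ^ a := Real.rpow_pos_of_pos hp0 a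
    have hpb0 : (0:ℝ) < p ^ b := Real.rpow_pos_of_pos hp0 b
    rw [Real.rpow_sub hp0 a 1, Real.rpow_sub hp0 b 1, Real.rpow_sub hp0 a b, Real.rpow_one]
    have h1 : (1:ℝ) - p ^ a ≠ 0 := by linarith
    have h2 : (1:ℝ) - p ^ b ≠ 0 := by linarith
    have h3 : (1:ℝ) - p ≠ 0 := by have := hp.2; intro h; linarith [sub_eq_zero.mp h]
    field_simp
    ring
  refine ⟨key, ?_⟩
  intro p hp q hq hpq
  simp only
  rw [key p hp, key q hq]
  have hF := F_antitone hb hba hp hq hpq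
  simp only at hF
  have hab : 0 ≤ a / b := by positivity
  nlinarith [mul_le_mul_of_nonneg_left hF hab]
end
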